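/- arXiv:2410.08367 — 3 statements merged into one kernel-verified Lean document; each statement's English description precedes it below -/
import Mathlib

section
/- The minimal eigenvalue (ground-state energy) of the Heisenberg star Hamiltonian H_star^(N) = (1/4) Σ_{j=1}^{N−1} (X_j X_N + Y_j Y_N + Z_j Z_N) on N qubits equals −(N+1)/4. -/
open Matrix Kronecker ComplexOrder

noncomputable def lmax {m : Type*} [Fintype m] [DecidableEq m] {A : Matrix m m ℂ}
    (hA : A.IsHermitian) : ℝ := ⨆ i, hA.eigenvalues i

noncomputable def lmin {m : Type*} [Fintype m] [DecidableEq m] {A : Matrix m m ℂ}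
    (hA : A.IsHermitian) : ℝ := ⨅ i, hA.eigenvalues i

def PX : Matrix (Fin 2) (Fin 2) ℂ := !![0, 1; 1, 0]
def PY : Matrix (Fin 2) (Fin 2) ℂ := !![0, -Complex.I; Complex.I, 0]
def PZ : Matrix (Fin 2) (Fin 2) ℂ := !![1, 0; 0, -1]

/-- The Bell state `|B_{xy}⟩ = (|0 y⟩ + (-1)^x |1 ȳ⟩)/√2` as a vector on two qubits. -/
noncomputable def bell (x y : Fin 2) : Fin 2 × Fin 2 → ℂ := fun p =>
  ((if p = (0, y) then 1 else 0) + (-1 : ℂ) ^ (x : ℕ) * (if p = (1, y + 1) then 1 else 0))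
    / (Real.sqrt 2 : ℂ)

/-- The rank-one projector `|B_{xy}⟩⟨B_{xy}|`. -/
noncomputable def bellProj (x y : Fin 2) : Matrix (Fin 2 × Fin 2) (Fin 2 × Fin 2) ℂ :=
  Matrix.vecMulVec (bell x y) (fun p => (starRingEnd ℂ) (bell x y p))

/-- Embed a two-qubit operator `A` on sites `k, ℓ` of an `N`-qubit register,
acting as the identity on all other sites. -/
def embed2 {N : ℕ} (k ℓ : Fin N) (A : Matrix (Fin 2 × Fin 2) (Fin 2 × Fin 2) ℂ) :
    Matrix (Fin N → Fin 2) (Fin N → Fin 2) ℂ := fun f g =>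
  A (f k, f ℓ) (g k, g ℓ) * (if ∀ i, i ≠ k → i ≠ ℓ → f i = g i then 1 else 0)

/-- The Heisenberg star Hamiltonian on `n+1` qubits, with center the last qubit:
`H_star = (1/4) Σ_{j=1}^{n} (X_j X_c + Y_j Y_c + Z_j Z_c)`. -/
noncomputable def Hstar (n : ℕ) : Matrix (Fin (n+1) → Fin 2) (Fin (n+1) → Fin 2) ℂ :=
  (1/4 : ℂ) • ∑ j : Fin n, embed2 j.castSucc (Fin.last n) (PX ⊗ₖ PX + PY ⊗ₖ PY + PZ ⊗ₖ PZ)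

/-- The star-sum state `σ_star = Σ_{j=1}^{n} |B₁₁⟩⟨B₁₁|_{j,c} ⊗ 𝟙` on `n+1` qubits. -/
noncomputable def sigmaStar (n : ℕ) : Matrix (Fin (n+1) → Fin 2) (Fin (n+1) → Fin 2) ℂ :=
  ∑ j : Fin n, embed2 j.castSucc (Fin.last n) (bellProj 1 1)

namespace HstarAux

variable {N : ℕ}

def embed1 (i : Fin N) (A : Matrix (Fin 2) (Fin 2) ℂ) :
    Matrix (Fin N → Fin 2) (Fin N → Fin 2) ℂ := fun f g =>
  A (f i) (g i) * (if ∀ j, j ≠ i → f j = g j then 1 else 0)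

def embed3 (i k l : Fin N) (M : Matrix ((Fin 2 × Fin 2) × Fin 2) ((Fin 2 × Fin 2) × Fin 2) ℂ) :
    Matrix (Fin N → Fin 2) (Fin N → Fin 2) ℂ := fun f g =>
  M ((f i, f k), f l) ((g i, g k), g l) *
    (if ∀ j, j ≠ i → j ≠ k → j ≠ l → f j = g j then 1 else 0)

lemma sum_delta1 (i : Fin N) (f : Fin N → Fin 2) (F : (Fin N → Fin 2) → ℂ) :
    ∑ hh : Fin N → Fin 2, (if ∀ j, j ≠ i → f j = hh j then (1:ℂ) else 0) * F hh
      = ∑ a : Fin 2, F (Function.update f i a) := by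
  have key : ∀ hh : Fin N → Fin 2, (if ∀ j, j ≠ i → f j = hh j then (1:ℂ) else 0) * F hh
      = ∑ a : Fin 2, if Function.update f i a = hh then F hh else 0 := by
    intro hh
    by_cases hc : ∀ j, j ≠ i → f j = hh j
    · rw [if_pos hc, one_mul]
      have h1 : ∀ a : Fin 2, Function.update f i a = hh ↔ a = hh i := by
        intro a
        constructor
        · intro e; rw [← e]; simp
        · intro e; subst e; funext j
          by_cases hj : j = i
          · subst hj; simp
          · rw [Function.update_of_ne hj]; exact hc j hj
      simp only [h1]
      simp
    · rw [if_neg hc, zero_mul]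
      symm
      apply Finset.sum_eq_zero
      intro a _
      rw [if_neg]
      intro e
      apply hc
      intro j hj
      rw [← e, Function.update_of_ne hj]
  simp_rw [key]
  rw [Finset.sum_comm]
  apply Finset.sum_congr rfl
  intro a _
  rw [Finset.sum_ite_eq Finset.univ (Function.update f i a) F]
  simp

lemma sum_delta2 (i k : Fin N) (hik : i ≠ k) (f : Fin N → Fin 2) (F : (Fin N → Fin 2) → ℂ) :
    ∑ hh : Fin N → Fin 2, (if ∀ j, j ≠ i → j ≠ k → f j = hh j then (1:ℂ) else 0) * F hh
      = ∑ a : Fin 2, ∑ b : Fin 2, F (Function.update (Function.update f i a) k b) := by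
  have key : ∀ hh : Fin N → Fin 2, (if ∀ j, j ≠ i → j ≠ k → f j = hh j then (1:ℂ) else 0) * F hh
      = ∑ a : Fin 2, ∑ b : Fin 2,
          if Function.update (Function.update f i a) k b = hh then F hh else 0 := by
    intro hh
    by_cases hc : ∀ j, j ≠ i → j ≠ k → f j = hh j
    · rw [if_pos hc, one_mul]
      have h1 : ∀ a b : Fin 2, Function.update (Function.update f i a) k b = hh
          ↔ (a = hh i ∧ b = hh k) := by
        intro a b
        constructor
        · intro e
          constructor
          · rw [← e, Function.update_of_ne hik, Function.update_self]
          · rw [← e, Function.update_self]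
        · rintro ⟨ea, eb⟩
          subst ea; subst eb
          funext j
          by_cases hj : j = k
          · subst hj; simp
          · rw [Function.update_of_ne hj]
            by_cases hj' : j = i
            · subst hj'; simp
            · rw [Function.update_of_ne hj']; exact hc j hj' hj
      simp only [h1, ite_and]
      simp
    · rw [if_neg hc, zero_mul]
      symm
      apply Finset.sum_eq_zero
      intro a _
      apply Finset.sum_eq_zero
      intro b _
      rw [if_neg]
      intro e
      apply hc
      intro j hj hj'
      rw [← e, Function.update_of_ne hj', Function.update_of_ne hj]
  simp_rw [key]
  rw [Finset.sum_comm]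
  apply Finset.sum_congr rfl
  intro a _
  rw [Finset.sum_comm]
  apply Finset.sum_congr rfl
  intro b _
  rw [Finset.sum_ite_eq Finset.univ _ F]
  simp

lemma delta_update (i : Fin N) (a : Fin 2) (f g : Fin N → Fin 2) :
    (∀ j, j ≠ i → Function.update f i a j = g j) ↔ (∀ j, j ≠ i → f j = g j) := by
  refine forall_congr' fun j => imp_congr_right fun hj => ?_
  rw [Function.update_of_ne hj]

set_option maxHeartbeats 1600000 in
lemma embed1_mul_same (i : Fin N) (A B : Matrix (Fin 2) (Fin 2) ℂ) :
    embed1 i A * embed1 i B = embed1 i (A * B) := by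
  ext f g
  rw [Matrix.mul_apply]
  calc
    ∑ hh, embed1 i A f hh * embed1 i B hh g
      = ∑ hh : Fin N → Fin 2, (if ∀ j, j ≠ i → f j = hh j then (1:ℂ) else 0) *
          (A (f i) (hh i) * (B (hh i) (g i) *
            (if ∀ j, j ≠ i → hh j = g j then (1:ℂ) else 0))) := by
        apply Finset.sum_congr rfl; intro hh _; simp only [embed1]; ring
    _ = ∑ a : Fin 2, A (f i) ((Function.update f i a) i) *
          (B ((Function.update f i a) i) (g i) *
           (if ∀ j, j ≠ i → (Function.update f i a) j = g j then (1:ℂ) else 0)) :=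
        sum_delta1 i f (fun hh => A (f i) (hh i) * (B (hh i) (g i) *
            (if ∀ j, j ≠ i → hh j = g j then (1:ℂ) else 0)))
    _ = ∑ a : Fin 2, A (f i) a * B a (g i) *
          (if ∀ j, j ≠ i → f j = g j then (1:ℂ) else 0) := by
        apply Finset.sum_congr rfl; intro a _
        simp only [Function.update_self, delta_update]; ring
    _ = embed1 i (A * B) f g := by
        rw [← Finset.sum_mul, embed1, Matrix.mul_apply]

set_option maxHeartbeats 1600000 in
lemma embed1_mul_embed1 {i k : Fin N} (hik : i ≠ k) (A B : Matrix (Fin 2) (Fin 2) ℂ) :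
    embed1 i A * embed1 k B = embed2 i k (A ⊗ₖ B) := by
  ext f g
  rw [Matrix.mul_apply]
  calc
    ∑ hh, embed1 i A f hh * embed1 k B hh g
      = ∑ hh : Fin N → Fin 2, (if ∀ j, j ≠ i → f j = hh j then (1:ℂ) else 0) *
          (A (f i) (hh i) * (B (hh k) (g k) *
            (if ∀ j, j ≠ k → hh j = g j then (1:ℂ) else 0))) := by
        apply Finset.sum_congr rfl; intro hh _; simp only [embed1]; ring
    _ = ∑ a : Fin 2, A (f i) ((Function.update f i a) i) *
          (B ((Function.update f i a) k) (g k) *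
           (if ∀ j, j ≠ k → (Function.update f i a) j = g j then (1:ℂ) else 0)) :=
        sum_delta1 i f (fun hh => A (f i) (hh i) * (B (hh k) (g k) *
            (if ∀ j, j ≠ k → hh j = g j then (1:ℂ) else 0)))
    _ = embed2 i k (A ⊗ₖ B) f g := by
        have hdel : ∀ a : Fin 2, (∀ j, j ≠ k → (Function.update f i a) j = g j)
            ↔ (a = g i ∧ ∀ j, j ≠ i → j ≠ k → f j = g j) := by
          intro a
          constructor
          · intro H
            refine ⟨by rw [← H i hik, Function.update_self], fun j hj hj' => ?_⟩
            rw [← H j hj', Function.update_of_ne hj]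
          · rintro ⟨ha, H⟩
            intro j hj
            by_cases hji : j = i
            · subst hji; rw [Function.update_self]; exact ha
            · rw [Function.update_of_ne hji]; exact H j hji hj
        simp only [hdel, ite_and, Function.update_self, Function.update_of_ne hik.symm]
        rw [Finset.sum_eq_single (g i)]
        · simp only [if_pos rfl, if_true, embed2, Matrix.kroneckerMap_apply]; ring
        · intro b _ hb; simp [hb]
        · intro hmem; simp at hmem

end HstarAux

namespace HstarAux
variable {N : ℕ}

lemma embed2_comm (i k : Fin N) (A B : Matrix (Fin 2) (Fin 2) ℂ) :
    embed2 k i (B ⊗ₖ A) = embed2 i k (A ⊗ₖ B) := by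
  ext f g
  have hiff : (∀ j, j ≠ k → j ≠ i → f j = g j) ↔ (∀ j, j ≠ i → j ≠ k → f j = g j) := by
    constructor <;> intro H j h1 h2 <;> exact H j h2 h1
  simp only [embed2, Matrix.kroneckerMap_apply]
  rw [if_congr hiff rfl rfl]
  ring

lemma embed1_comm {i k : Fin N} (hik : i ≠ k) (A B : Matrix (Fin 2) (Fin 2) ℂ) :
    embed1 i A * embed1 k B = embed1 k B * embed1 i A := by
  rw [embed1_mul_embed1 hik, embed1_mul_embed1 hik.symm, embed2_comm]

set_option maxHeartbeats 1600000 in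
lemma embed2_mul_embed1 {i k l : Fin N} (hik : i ≠ k) (hil : i ≠ l) (hkl : k ≠ l)
    (M : Matrix (Fin 2 × Fin 2) (Fin 2 × Fin 2) ℂ) (C : Matrix (Fin 2) (Fin 2) ℂ) :
    embed2 i k M * embed1 l C = embed3 i k l (M ⊗ₖ C) := by
  ext f g
  rw [Matrix.mul_apply]
  calc
    ∑ hh, embed2 i k M f hh * embed1 l C hh g
      = ∑ hh : Fin N → Fin 2, (if ∀ j, j ≠ i → j ≠ k → f j = hh j then (1:ℂ) else 0) *
          (M (f i, f k) (hh i, hh k) * (C (hh l) (g l) *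
            (if ∀ j, j ≠ l → hh j = g j then (1:ℂ) else 0))) := by
        apply Finset.sum_congr rfl; intro hh _; simp only [embed2, embed1]; ring
    _ = ∑ a : Fin 2, ∑ b : Fin 2,
          M (f i, f k) ((Function.update (Function.update f i a) k b) i,
                        (Function.update (Function.update f i a) k b) k) *
          (C ((Function.update (Function.update f i a) k b) l) (g l) *
           (if ∀ j, j ≠ l → (Function.update (Function.update f i a) k b) j = g j
            then (1:ℂ) else 0)) :=
        sum_delta2 i k hik f (fun hh => M (f i, f k) (hh i, hh k) * (C (hh l) (g l) *
            (if ∀ j, j ≠ l → hh j = g j then (1:ℂ) else 0)))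
    _ = embed3 i k l (M ⊗ₖ C) f g := by
        have hdel : ∀ a b : Fin 2,
            (∀ j, j ≠ l → (Function.update (Function.update f i a) k b) j = g j)
            ↔ (a = g i ∧ b = g k ∧ ∀ j, j ≠ i → j ≠ k → j ≠ l → f j = g j) := by
          intro a b
          constructor
          · intro H
            refine ⟨?_, ?_, fun j hj hj' hj'' => ?_⟩
            · rw [← H i hil, Function.update_of_ne hik, Function.update_self]
            · rw [← H k hkl, Function.update_self]
            · rw [← H j hj'', Function.update_of_ne hj', Function.update_of_ne hj]
          · rintro ⟨ha, hb, H⟩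
            intro j hj
            by_cases hjk : j = k
            · subst hjk; rw [Function.update_self]; exact hb
            · rw [Function.update_of_ne hjk]
              by_cases hji : j = i
              · subst hji; rw [Function.update_self]; exact ha
              · rw [Function.update_of_ne hji]; exact H j hji hjk hj
        simp only [hdel, ite_and, Function.update_self,
          Function.update_of_ne hik, Function.update_of_ne hil, Function.update_of_ne hkl,
          Function.update_of_ne hik.symm, Function.update_of_ne hil.symm,
          Function.update_of_ne hkl.symm]
        rw [Finset.sum_eq_single (g i)]
        · rw [Finset.sum_eq_single (g k)]
          · simp only [if_pos rfl, if_true, embed3, Matrix.kroneckerMap_apply]; ring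
          · intro b _ hb; simp [hb]
          · intro hmem; simp at hmem
        · intro a _ ha; apply Finset.sum_eq_zero; intro b _; simp [ha]
        · intro hmem; simp at hmem

lemma embed3_swap {i k l : Fin N}
    (M : Matrix ((Fin 2 × Fin 2) × Fin 2) ((Fin 2 × Fin 2) × Fin 2) ℂ) :
    embed3 k i l M
      = embed3 i k l (M.submatrix (fun p => ((p.1.2, p.1.1), p.2))
          (fun p => ((p.1.2, p.1.1), p.2))) := by
  ext f g
  have hiff : (∀ j, j ≠ k → j ≠ i → j ≠ l → f j = g j)
      ↔ (∀ j, j ≠ i → j ≠ k → j ≠ l → f j = g j) := by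
    constructor <;> intro H j h1 h2 h3 <;> exact H j h2 h1 h3
  simp only [embed3, Matrix.submatrix_apply]
  rw [if_congr hiff rfl rfl]

lemma embed2_one {i k : Fin N} (hik : i ≠ k) : embed2 i k 1 = (1 : Matrix _ _ ℂ) := by
  ext f g
  by_cases hfg : f = g
  · subst hfg; simp [embed2, Matrix.one_apply]
  · rw [Matrix.one_apply_ne hfg, embed2]
    by_cases h1 : ((f i, f k) : Fin 2 × Fin 2) = (g i, g k)
    · have h2 : ¬ (∀ j, j ≠ i → j ≠ k → f j = g j) := by
        intro H
        apply hfg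
        funext j
        by_cases hji : j = i
        · subst hji; exact congrArg Prod.fst h1
        · by_cases hjk : j = k
          · subst hjk; exact congrArg Prod.snd h1
          · exact H j hji hjk
      rw [if_neg h2, mul_zero]
    · rw [Matrix.one_apply_ne h1, zero_mul]

lemma embed3_one {i k l : Fin N} (hik : i ≠ k) (hil : i ≠ l) (hkl : k ≠ l) :
    embed3 i k l 1 = (1 : Matrix _ _ ℂ) := by
  ext f g
  by_cases hfg : f = g
  · subst hfg; simp [embed3, Matrix.one_apply]
  · rw [Matrix.one_apply_ne hfg, embed3]
    by_cases h1 : (((f i, f k), f l) : (Fin 2 × Fin 2) × Fin 2) = ((g i, g k), g l)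
    · have h2 : ¬ (∀ j, j ≠ i → j ≠ k → j ≠ l → f j = g j) := by
        intro H
        apply hfg
        funext j
        by_cases hji : j = i
        · subst hji; exact congrArg (fun p => p.1.1) h1
        · by_cases hjk : j = k
          · subst hjk; exact congrArg (fun p => p.1.2) h1
          · by_cases hjl : j = l
            · subst hjl; exact congrArg Prod.snd h1
            · exact H j hji hjk hjl
      rw [if_neg h2, mul_zero]
    · rw [Matrix.one_apply_ne h1, zero_mul]

lemma embed2_add (i k : Fin N) (A B : Matrix (Fin 2 × Fin 2) (Fin 2 × Fin 2) ℂ) :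
    embed2 i k (A + B) = embed2 i k A + embed2 i k B := by
  ext f g; simp only [embed2, Matrix.add_apply]; split <;> ring

lemma embed2_smul (i k : Fin N) (c : ℂ) (A : Matrix (Fin 2 × Fin 2) (Fin 2 × Fin 2) ℂ) :
    embed2 i k (c • A) = c • embed2 i k A := by
  ext f g; simp only [embed2, Matrix.smul_apply, smul_eq_mul]; split <;> ring

lemma embed3_add (i k l : Fin N)
    (A B : Matrix ((Fin 2 × Fin 2) × Fin 2) ((Fin 2 × Fin 2) × Fin 2) ℂ) :
    embed3 i k l (A + B) = embed3 i k l A + embed3 i k l B := by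
  ext f g; simp only [embed3, Matrix.add_apply]; split <;> ring

lemma embed3_smul (i k l : Fin N) (c : ℂ)
    (A : Matrix ((Fin 2 × Fin 2) × Fin 2) ((Fin 2 × Fin 2) × Fin 2) ℂ) :
    embed3 i k l (c • A) = c • embed3 i k l A := by
  ext f g; simp only [embed3, Matrix.smul_apply, smul_eq_mul]; split <;> ring

lemma embed3_sub (i k l : Fin N)
    (A B : Matrix ((Fin 2 × Fin 2) × Fin 2) ((Fin 2 × Fin 2) × Fin 2) ℂ) :
    embed3 i k l (A - B) = embed3 i k l A - embed3 i k l B := by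
  ext f g; simp only [embed3, Matrix.sub_apply]; split <;> ring

end HstarAux

namespace HstarAux

def sv : Fin 2 × Fin 2 → ℂ := fun p => if p = (0,1) then 1 else if p = (1,0) then -1 else 0

lemma bell_eq : bell 1 1 = fun p => sv p / (Real.sqrt 2 : ℂ) := by
  funext p
  rcases p with ⟨a, b⟩
  fin_cases a <;> fin_cases b <;> simp [bell, sv, Prod.ext_iff, Fin.ext_iff] <;> norm_num

lemma sqrt2_mul_self : (Real.sqrt 2 : ℂ) * (Real.sqrt 2 : ℂ) = 2 := by
  rw [← Complex.ofReal_mul, Real.mul_self_sqrt (by norm_num)]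
  norm_num

lemma bellProj_eq : bellProj 1 1 = fun p q => sv p * sv q / 2 := by
  funext p q
  have hs : ∀ r : Fin 2 × Fin 2, (starRingEnd ℂ) (sv r) = sv r := by
    intro r
    rcases r with ⟨a, b⟩
    fin_cases a <;> fin_cases b <;> simp [sv, Prod.ext_iff, Fin.ext_iff]
  rw [bellProj, Matrix.vecMulVec_apply, bell_eq]
  simp only [map_div₀, hs, Complex.conj_ofReal]
  rw [div_mul_div_comm, sqrt2_mul_self]

def Pl : Fin 3 → Matrix (Fin 2) (Fin 2) ℂ := ![PX, PY, PZ]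

set_option maxHeartbeats 3000000 in
lemma pauli_id1 :
    ∑ a : Fin 3, ∑ b : Fin 3, (Pl a * Pl b) ⊗ₖ (Pl a * Pl b)
      = (3:ℂ) • (1 : Matrix (Fin 2 × Fin 2) (Fin 2 × Fin 2) ℂ)
        - (2:ℂ) • (PX ⊗ₖ PX + PY ⊗ₖ PY + PZ ⊗ₖ PZ) := by
  ext p q
  rcases p with ⟨a, b⟩
  rcases q with ⟨c, d⟩
  fin_cases a <;> fin_cases b <;> fin_cases c <;> fin_cases d <;>
    simp [Fin.sum_univ_three, Pl, PX, PY, PZ, Matrix.mul_apply, Fin.sum_univ_two,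
      Matrix.one_apply, Prod.ext_iff, Fin.ext_iff, Complex.ext_iff] <;> norm_num

end HstarAux

namespace HstarAux

set_option maxHeartbeats 4000000 in
set_option maxRecDepth 10000 in
lemma pauli_id2 :
    ∑ a : Fin 3, ∑ b : Fin 3,
        ((Pl a ⊗ₖ Pl b) ⊗ₖ (Pl a * Pl b) + (Pl b ⊗ₖ Pl a) ⊗ₖ (Pl a * Pl b))
      = (2:ℂ) • (1 : Matrix ((Fin 2 × Fin 2) × Fin 2) ((Fin 2 × Fin 2) × Fin 2) ℂ)
        - (8:ℂ) • ((bellProj 1 1) ⊗ₖ (1 : Matrix (Fin 2) (Fin 2) ℂ)) := by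
  ext p q
  simp only [Matrix.sum_apply, Fin.sum_univ_three, Matrix.add_apply, Matrix.sub_apply,
    Matrix.smul_apply, Matrix.kroneckerMap_apply, Pl, Matrix.cons_val_zero,
    Matrix.cons_val_one, Matrix.cons_val_two, Matrix.head_cons, Matrix.tail_cons]
  rcases p with ⟨⟨a, b⟩, c⟩
  rcases q with ⟨⟨d, e⟩, f⟩
  fin_cases a <;> fin_cases b <;> fin_cases c <;> fin_cases d <;> fin_cases e <;> fin_cases f <;>
    simp [PX, PY, PZ, Matrix.mul_apply, Fin.sum_univ_two,
      Matrix.one_apply, bellProj_eq, sv, Prod.ext_iff] <;>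
    norm_num

end HstarAux


namespace HstarAux

variable {n : ℕ}

def heis4 : Matrix (Fin 2 × Fin 2) (Fin 2 × Fin 2) ℂ := PX ⊗ₖ PX + PY ⊗ₖ PY + PZ ⊗ₖ PZ

lemma heis4_eq : heis4 = ∑ a : Fin 3, Pl a ⊗ₖ Pl a := by
  simp [heis4, Pl, Fin.sum_univ_three]

lemma embed1_one {N : ℕ} (i : Fin N) : embed1 i 1 = (1 : Matrix _ _ ℂ) := by
  ext f g
  by_cases hfg : f = g
  · subst hfg; simp [embed1, Matrix.one_apply]
  · rw [Matrix.one_apply_ne hfg, embed1]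
    by_cases h1 : f i = g i
    · have h2 : ¬ (∀ j, j ≠ i → f j = g j) := by
        intro H
        apply hfg
        funext j
        by_cases hji : j = i
        · subst hji; exact h1
        · exact H j hji
      rw [if_neg h2, mul_zero]
    · rw [Matrix.one_apply_ne h1, zero_mul]

lemma embed2_sub {N : ℕ} (i k : Fin N) (A B : Matrix (Fin 2 × Fin 2) (Fin 2 × Fin 2) ℂ) :
    embed2 i k (A - B) = embed2 i k A - embed2 i k B := by
  ext f g; simp only [embed2, Matrix.sub_apply]; split <;> ring

lemma embed2_sum {N : ℕ} {ι : Type*} (s : Finset ι) (i k : Fin N)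
    (M : ι → Matrix (Fin 2 × Fin 2) (Fin 2 × Fin 2) ℂ) :
    embed2 i k (∑ a ∈ s, M a) = ∑ a ∈ s, embed2 i k (M a) := by
  ext f g
  simp only [embed2, Matrix.sum_apply, Finset.sum_mul]

lemma embed3_sum {N : ℕ} {ι : Type*} (s : Finset ι) (i k l : Fin N)
    (M : ι → Matrix ((Fin 2 × Fin 2) × Fin 2) ((Fin 2 × Fin 2) × Fin 2) ℂ) :
    embed3 i k l (∑ a ∈ s, M a) = ∑ a ∈ s, embed3 i k l (M a) := by
  ext f g
  simp only [embed3, Matrix.sum_apply, Finset.sum_mul]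

lemma embed3_kron_one {N : ℕ} {i k l : Fin N} (hik : i ≠ k) (hil : i ≠ l) (hkl : k ≠ l)
    (M : Matrix (Fin 2 × Fin 2) (Fin 2 × Fin 2) ℂ) :
    embed3 i k l (M ⊗ₖ (1 : Matrix (Fin 2) (Fin 2) ℂ)) = embed2 i k M := by
  rw [← embed2_mul_embed1 hik hil hkl, embed1_one, mul_one]

lemma castSucc_ne_last (j : Fin n) : j.castSucc ≠ Fin.last n :=
  (Fin.castSucc_lt_last j).ne

lemma Ej_eq (j : Fin n) :
    embed2 j.castSucc (Fin.last n) heis4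
      = ∑ a : Fin 3, embed1 j.castSucc (Pl a) * embed1 (Fin.last n) (Pl a) := by
  rw [heis4_eq, embed2_sum]
  exact Finset.sum_congr rfl fun a _ => (embed1_mul_embed1 (castSucc_ne_last j) _ _).symm

lemma diag_term (j : Fin n) :
    (∑ a : Fin 3, embed1 j.castSucc (Pl a) * embed1 (Fin.last n) (Pl a)) *
      (∑ b : Fin 3, embed1 j.castSucc (Pl b) * embed1 (Fin.last n) (Pl b))
    = (3:ℂ) • 1 - (2:ℂ) • embed2 j.castSucc (Fin.last n) heis4 := by
  have hjc : j.castSucc ≠ Fin.last n := castSucc_ne_last j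
  rw [Finset.sum_mul_sum]
  have hterm : ∀ a b : Fin 3,
      (embed1 j.castSucc (Pl a) * embed1 (Fin.last n) (Pl a)) *
        (embed1 j.castSucc (Pl b) * embed1 (Fin.last n) (Pl b))
      = embed2 j.castSucc (Fin.last n) ((Pl a * Pl b) ⊗ₖ (Pl a * Pl b)) := by
    intro a b
    rw [mul_assoc, ← mul_assoc (embed1 (Fin.last n) (Pl a)), embed1_comm hjc.symm,
      mul_assoc, ← mul_assoc, embed1_mul_same, embed1_mul_same, embed1_mul_embed1 hjc]
  simp_rw [hterm, ← embed2_sum]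
  have : (∑ a : Fin 3, ∑ b : Fin 3, (Pl a * Pl b) ⊗ₖ (Pl a * Pl b))
      = (3:ℂ) • 1 - (2:ℂ) • heis4 := pauli_id1
  rw [this, embed2_sub, embed2_smul, embed2_smul, embed2_one hjc]

noncomputable def K0 : Matrix ((Fin 2 × Fin 2) × Fin 2) ((Fin 2 × Fin 2) × Fin 2) ℂ :=
  ∑ a : Fin 3, ∑ b : Fin 3, (Pl a ⊗ₖ Pl b) ⊗ₖ (Pl a * Pl b)

lemma offdiag_term {j k : Fin n} (hjk : j ≠ k) :
    (∑ a : Fin 3, embed1 j.castSucc (Pl a) * embed1 (Fin.last n) (Pl a)) *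
      (∑ b : Fin 3, embed1 k.castSucc (Pl b) * embed1 (Fin.last n) (Pl b))
    = embed3 j.castSucc k.castSucc (Fin.last n) K0 := by
  have hjc : j.castSucc ≠ Fin.last n := castSucc_ne_last j
  have hkc : k.castSucc ≠ Fin.last n := castSucc_ne_last k
  have hjk' : j.castSucc ≠ k.castSucc := by
    simpa [Fin.castSucc_inj] using hjk
  rw [Finset.sum_mul_sum]
  have hterm : ∀ a b : Fin 3,
      (embed1 j.castSucc (Pl a) * embed1 (Fin.last n) (Pl a)) *
        (embed1 k.castSucc (Pl b) * embed1 (Fin.last n) (Pl b))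
      = embed3 j.castSucc k.castSucc (Fin.last n) ((Pl a ⊗ₖ Pl b) ⊗ₖ (Pl a * Pl b)) := by
    intro a b
    rw [mul_assoc, ← mul_assoc (embed1 (Fin.last n) (Pl a)), embed1_comm hkc.symm,
      mul_assoc, ← mul_assoc, embed1_mul_same, embed1_mul_embed1 hjk',
      embed2_mul_embed1 hjk' hjc hkc]
  simp_rw [hterm, K0, embed3_sum]

def swp : (Fin 2 × Fin 2) × Fin 2 → (Fin 2 × Fin 2) × Fin 2 := fun p => ((p.1.2, p.1.1), p.2)

lemma K0_sym : K0 + K0.submatrix swp swp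
    = (2:ℂ) • 1 - (8:ℂ) • ((bellProj 1 1) ⊗ₖ (1 : Matrix (Fin 2) (Fin 2) ℂ)) := by
  have hsub : K0.submatrix swp swp
      = ∑ a : Fin 3, ∑ b : Fin 3, (Pl b ⊗ₖ Pl a) ⊗ₖ (Pl a * Pl b) := by
    ext p q
    simp only [K0, Matrix.submatrix_apply, Matrix.sum_apply, swp, Matrix.kroneckerMap_apply]
    apply Finset.sum_congr rfl; intro a _
    apply Finset.sum_congr rfl; intro b _
    ring
  rw [hsub, K0, ← Finset.sum_add_distrib]
  rw [← pauli_id2]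
  apply Finset.sum_congr rfl; intro a _
  rw [← Finset.sum_add_distrib]

end HstarAux


namespace HstarAux

variable {n : ℕ}

noncomputable def S1 (n : ℕ) : Matrix (Fin (n+1) → Fin 2) (Fin (n+1) → Fin 2) ℂ :=
  ∑ j : Fin n, embed2 j.castSucc (Fin.last n) heis4

noncomputable def TT (n : ℕ) : Matrix (Fin (n+1) → Fin 2) (Fin (n+1) → Fin 2) ℂ :=
  ∑ p ∈ (Finset.univ : Finset (Fin n)).offDiag,
    embed2 p.1.castSucc p.2.castSucc (bellProj 1 1)

lemma Hstar_eq (n : ℕ) : Hstar n = (1/4 : ℂ) • S1 n := rfl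

lemma offDiag_swap {M : Type*} [AddCommMonoid M] (F : Fin n → Fin n → M) :
    ∑ p ∈ (Finset.univ : Finset (Fin n)).offDiag, F p.1 p.2
      = ∑ p ∈ (Finset.univ : Finset (Fin n)).offDiag, F p.2 p.1 := by
  refine Finset.sum_nbij' Prod.swap Prod.swap ?_ ?_ ?_ ?_ ?_
  · intro p hp
    rw [Finset.mem_offDiag] at hp ⊢
    exact ⟨hp.2.1, hp.1, hp.2.2.symm⟩
  · intro p hp
    rw [Finset.mem_offDiag] at hp ⊢
    exact ⟨hp.2.1, hp.1, hp.2.2.symm⟩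
  · intro p _; rfl
  · intro p _; rfl
  · intro p _; rfl

lemma embed3_swap' {N : ℕ} {i k l : Fin N}
    (M : Matrix ((Fin 2 × Fin 2) × Fin 2) ((Fin 2 × Fin 2) × Fin 2) ℂ) :
    embed3 k i l M = embed3 i k l (M.submatrix swp swp) := by
  rw [embed3_swap]; rfl

lemma TT_sym (hn : 1 ≤ n) :
    ∑ p ∈ (Finset.univ : Finset (Fin n)).offDiag,
        embed3 p.1.castSucc p.2.castSucc (Fin.last n) K0
      = ((n:ℂ) * n - n) • 1 - (4:ℂ) • TT n := by
  have hle : n ≤ n * n := Nat.le_mul_of_pos_left n hn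
  apply smul_right_injective _ (two_ne_zero (α := ℂ))
  show (2:ℂ) • _ = (2:ℂ) • _
  have copy : ∑ p ∈ (Finset.univ : Finset (Fin n)).offDiag,
        embed3 p.1.castSucc p.2.castSucc (Fin.last n) K0
      = ∑ p ∈ (Finset.univ : Finset (Fin n)).offDiag,
        embed3 p.1.castSucc p.2.castSucc (Fin.last n) (K0.submatrix swp swp) := by
    rw [offDiag_swap (F := fun j k => embed3 j.castSucc k.castSucc (Fin.last n) K0)]
    exact Finset.sum_congr rfl fun p _ => embed3_swap' K0
  rw [two_smul]
  nth_rewrite 2 [copy]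
  rw [← Finset.sum_add_distrib]
  have hterm : ∀ p ∈ (Finset.univ : Finset (Fin n)).offDiag,
      embed3 p.1.castSucc p.2.castSucc (Fin.last n) K0
        + embed3 p.1.castSucc p.2.castSucc (Fin.last n) (K0.submatrix swp swp)
      = (2:ℂ) • 1 - (8:ℂ) • embed2 p.1.castSucc p.2.castSucc (bellProj 1 1) := by
    intro p hp
    rw [Finset.mem_offDiag] at hp
    have h12 : p.1.castSucc ≠ p.2.castSucc := by
      simpa [Fin.castSucc_inj] using hp.2.2
    have h1c : p.1.castSucc ≠ Fin.last n := castSucc_ne_last p.1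
    have h2c : p.2.castSucc ≠ Fin.last n := castSucc_ne_last p.2
    rw [← embed3_add, K0_sym, embed3_sub, embed3_smul, embed3_smul,
      embed3_one h12 h1c h2c, embed3_kron_one h12 h1c h2c]
  rw [Finset.sum_congr rfl hterm, Finset.sum_sub_distrib, Finset.sum_const,
    ← Finset.smul_sum]
  rw [Finset.offDiag_card, Finset.card_univ, Fintype.card_fin]
  show ((n*n - n) : ℕ) • ((2:ℂ) • (1 : Matrix (Fin (n+1) → Fin 2) (Fin (n+1) → Fin 2) ℂ))
      - (8:ℂ) • TT n = (2:ℂ) • (((n:ℂ) * n - n) • 1 - (4:ℂ) • TT n)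
  rw [← Nat.cast_smul_eq_nsmul ℂ, Nat.cast_sub hle, Nat.cast_mul]
  module

set_option maxHeartbeats 800000 in
lemma key_identity (hn : 1 ≤ n) :
    (S1 n + 1) * (S1 n + 1) + (4:ℂ) • TT n = (((n:ℂ) + 1)^2) • 1 := by
  have hS : S1 n = ∑ j : Fin n,
      ∑ a : Fin 3, embed1 j.castSucc (Pl a) * embed1 (Fin.last n) (Pl a) :=
    Finset.sum_congr rfl fun j _ => Ej_eq j
  have hSS : S1 n * S1 n
      = ((3*(n:ℂ))) • 1 - (2:ℂ) • S1 n + (((n:ℂ) * n - n) • 1 - (4:ℂ) • TT n) := by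
    nth_rewrite 1 [hS]
    nth_rewrite 1 [hS]
    rw [Finset.sum_mul_sum]
    rw [← Finset.sum_product']
    rw [← Finset.diag_union_offDiag, Finset.sum_union (Finset.disjoint_diag_offDiag _),
      Finset.sum_diag]
    congr 1
    · calc
        ∑ j : Fin n, ((∑ a : Fin 3, embed1 j.castSucc (Pl a) * embed1 (Fin.last n) (Pl a)) *
            (∑ b : Fin 3, embed1 j.castSucc (Pl b) * embed1 (Fin.last n) (Pl b)))
          = ∑ j : Fin n, ((3:ℂ) • 1 - (2:ℂ) • embed2 j.castSucc (Fin.last n) heis4) :=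
            Finset.sum_congr rfl fun j _ => diag_term j
        _ = (3*(n:ℂ)) • 1 - (2:ℂ) • S1 n := by
            rw [Finset.sum_sub_distrib, Finset.sum_const, Finset.card_univ, Fintype.card_fin,
              ← Finset.smul_sum, ← Nat.cast_smul_eq_nsmul ℂ, smul_smul, S1]
            ring_nf
    · calc
        ∑ p ∈ (Finset.univ : Finset (Fin n)).offDiag,
            ((∑ a : Fin 3, embed1 p.1.castSucc (Pl a) * embed1 (Fin.last n) (Pl a)) *
             (∑ b : Fin 3, embed1 p.2.castSucc (Pl b) * embed1 (Fin.last n) (Pl b)))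
          = ∑ p ∈ (Finset.univ : Finset (Fin n)).offDiag,
              embed3 p.1.castSucc p.2.castSucc (Fin.last n) K0 := by
            refine Finset.sum_congr rfl fun p hp => ?_
            rw [Finset.mem_offDiag] at hp
            exact offdiag_term hp.2.2
        _ = ((n:ℂ) * n - n) • 1 - (4:ℂ) • TT n := TT_sym hn
  have expand : (S1 n + 1) * (S1 n + 1) = S1 n * S1 n + S1 n + S1 n + 1 := by
    noncomm_ring
  rw [expand, hSS]
  module

end HstarAux


namespace HstarAux

variable {n : ℕ}

set_option maxHeartbeats 800000 in
lemma embed2_mulVec {N : ℕ} {i k : Fin N} (hik : i ≠ k)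
    (A : Matrix (Fin 2 × Fin 2) (Fin 2 × Fin 2) ℂ) (x : (Fin N → Fin 2) → ℂ)
    (f : Fin N → Fin 2) :
    (embed2 i k A *ᵥ x) f = ∑ a : Fin 2, ∑ b : Fin 2,
      A (f i, f k) (a, b) * x (Function.update (Function.update f i a) k b) := by
  rw [Matrix.mulVec]
  show ∑ g : Fin N → Fin 2, embed2 i k A f g * x g = _
  calc
    ∑ g : Fin N → Fin 2, embed2 i k A f g * x g
      = ∑ g : Fin N → Fin 2, (if ∀ j, j ≠ i → j ≠ k → f j = g j then (1:ℂ) else 0) *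
          (A (f i, f k) (g i, g k) * x g) := by
        apply Finset.sum_congr rfl; intro g _; simp only [embed2]; ring
    _ = ∑ a : Fin 2, ∑ b : Fin 2,
          A (f i, f k) ((Function.update (Function.update f i a) k b) i,
            (Function.update (Function.update f i a) k b) k) *
          x (Function.update (Function.update f i a) k b) :=
        sum_delta2 i k hik f (fun g => A (f i, f k) (g i, g k) * x g)
    _ = _ := by
        apply Finset.sum_congr rfl; intro a _
        apply Finset.sum_congr rfl; intro b _
        rw [Function.update_self, Function.update_of_ne hik, Function.update_self]

lemma kron_one_posSemidef {P R : Type*} [Fintype P] [Fintype R] [DecidableEq P] [DecidableEq R]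
    {A : Matrix P P ℂ} (hA : A.PosSemidef) :
    (A ⊗ₖ (1 : Matrix R R ℂ)).PosSemidef := by
  refine Matrix.PosSemidef.of_dotProduct_mulVec_nonneg ?_ ?_
  · -- Hermitian
    ext ⟨p, r⟩ ⟨q, t⟩
    simp only [Matrix.conjTranspose_apply, Matrix.kroneckerMap_apply, Matrix.one_apply]
    rw [← hA.1]
    simp only [Matrix.conjTranspose_apply]
    by_cases hrt : r = t
    · subst hrt
      simp only [if_pos rfl, mul_one]
      simpa using (hA.1.apply p q).symm
    · simp [hrt, Ne.symm hrt]
  · intro x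
    have hexp : dotProduct (star x) ((A ⊗ₖ (1 : Matrix R R ℂ)) *ᵥ x)
        = ∑ r : R, dotProduct (star (fun q => x (q, r))) (A *ᵥ (fun q => x (q, r))) := by
      rw [dotProduct]
      rw [Fintype.sum_prod_type]
      rw [Finset.sum_comm]
      apply Finset.sum_congr rfl; intro r _
      rw [dotProduct]
      apply Finset.sum_congr rfl; intro p _
      simp only [Pi.star_apply]
      congr 1
      rw [Matrix.mulVec, Matrix.mulVec, dotProduct, dotProduct,
        Fintype.sum_prod_type]
      rw [Finset.sum_comm]
      rw [Finset.sum_eq_single r]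
      · apply Finset.sum_congr rfl; intro q _
        simp [Matrix.kroneckerMap_apply, Matrix.one_apply]
      · intro t _ ht
        apply Finset.sum_eq_zero; intro q _
        simp [Matrix.kroneckerMap_apply, Matrix.one_apply, Ne.symm ht]
      · intro hmem; simp at hmem
    rw [hexp]
    exact Finset.sum_nonneg fun r _ => hA.dotProduct_mulVec_nonneg _

lemma bellProj_posSemidef : (bellProj 1 1).PosSemidef := by
  have : bellProj 1 1 = Matrix.replicateCol (Fin 1) (bell 1 1) * (Matrix.replicateCol (Fin 1) (bell 1 1))ᴴ := by
    ext p q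
    simp [bellProj, Matrix.mul_apply, Matrix.vecMulVec_apply, Matrix.conjTranspose_apply,
      mul_comm]
  rw [this]
  exact Matrix.posSemidef_self_mul_conjTranspose _

lemma embed2_posSemidef {N : ℕ} {i k : Fin N} (hik : i ≠ k)
    {A : Matrix (Fin 2 × Fin 2) (Fin 2 × Fin 2) ℂ} (hA : A.PosSemidef) :
    (embed2 i k A).PosSemidef := by
  classical
  let R := {j : Fin N // j ≠ i ∧ j ≠ k} → Fin 2
  let e : (Fin N → Fin 2) → (Fin 2 × Fin 2) × R := fun f => ((f i, f k), fun j => f j.1)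
  have heq : embed2 i k A = (A ⊗ₖ (1 : Matrix R R ℂ)).submatrix e e := by
    ext f g
    simp only [Matrix.submatrix_apply, Matrix.kroneckerMap_apply, Matrix.one_apply, embed2, e]
    congr 1
    have : ((fun j : {j : Fin N // j ≠ i ∧ j ≠ k} => f j.1)
        = fun j : {j : Fin N // j ≠ i ∧ j ≠ k} => g j.1)
        ↔ (∀ j, j ≠ i → j ≠ k → f j = g j) := by
      rw [funext_iff]
      constructor
      · intro H j hj hj'; exact H ⟨j, hj, hj'⟩
      · intro H j; exact H j.1 j.2.1 j.2.2
    by_cases hc : ∀ j, j ≠ i → j ≠ k → f j = g j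
    · rw [if_pos hc, if_pos (this.mpr hc)]
    · rw [if_neg hc, if_neg (fun hh => hc (this.mp hh))]
  rw [heq]
  exact (kron_one_posSemidef hA).submatrix e

lemma sum_mulVec' {m : Type*} [Fintype m] {ι : Type*} (s : Finset ι)
    (M : ι → Matrix m m ℂ) (x : m → ℂ) :
    (∑ p ∈ s, M p) *ᵥ x = ∑ p ∈ s, M p *ᵥ x := by
  ext f
  simp only [Matrix.mulVec, dotProduct, Finset.sum_apply, Matrix.sum_apply,
    Finset.sum_mul]
  rw [Finset.sum_comm]

lemma dot_sum' {m : Type*} [Fintype m] {ι : Type*} (s : Finset ι)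
    (v : m → ℂ) (F : ι → m → ℂ) :
    dotProduct v (∑ p ∈ s, F p) = ∑ p ∈ s, dotProduct v (F p) := by
  simp only [dotProduct, Finset.sum_apply, Finset.mul_sum]
  rw [Finset.sum_comm]

lemma TT_nonneg (x : (Fin (n+1) → Fin 2) → ℂ) :
    0 ≤ dotProduct (star x) (TT n *ᵥ x) := by
  rw [TT, sum_mulVec', dot_sum']
  apply Finset.sum_nonneg
  intro p hp
  rw [Finset.mem_offDiag] at hp
  have h12 : p.1.castSucc ≠ p.2.castSucc := by
    simpa [Fin.castSucc_inj] using hp.2.2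
  exact (embed2_posSemidef h12 bellProj_posSemidef).dotProduct_mulVec_nonneg x

end HstarAux


namespace HstarAux

lemma S1_eq_smul_Hstar (n : ℕ) : S1 n = (4:ℂ) • Hstar n := by
  rw [Hstar_eq, smul_smul]
  norm_num

set_option maxHeartbeats 800000 in
lemma eig_lower (n : ℕ) (hn : 1 ≤ n) (h : (Hstar n).IsHermitian)
    (i : Fin (n+1) → Fin 2) :
    -(((n:ℝ) + 2)/4) ≤ h.eigenvalues i := by
  set lam : ℝ := h.eigenvalues i with hlam
  have hmv := h.mulVec_eigenvectorBasis i
  set v : (Fin (n+1) → Fin 2) → ℂ := ⇑(h.eigenvectorBasis i) with hvdef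
  have hv : Hstar n *ᵥ v = ((lam : ℝ) : ℂ) • v := by
    rw [hmv]
    ext f
    simp [Complex.real_smul, hlam]
  have hv0 : v ≠ 0 := by
    intro h0
    apply h.eigenvectorBasis.orthonormal.ne_zero i
    ext f
    exact congrFun h0 f
  set c : ℂ := ((4*lam + 1 : ℝ) : ℂ) with hc
  have hG : (S1 n + 1) *ᵥ v = c • v := by
    rw [Matrix.add_mulVec, Matrix.one_mulVec, S1_eq_smul_Hstar, Matrix.smul_mulVec, hv]
    ext f
    simp [hc]
    push_cast
    ring
  have hGG : ((S1 n + 1) * (S1 n + 1)) *ᵥ v = (c*c) • v := by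
    rw [← Matrix.mulVec_mulVec, hG, Matrix.mulVec_smul, hG, smul_smul]
  have happ := congrArg (fun M => dotProduct (star v) (M *ᵥ v)) (key_identity hn)
  rw [Matrix.add_mulVec, dotProduct_add, hGG, Matrix.smul_mulVec,
    Matrix.smul_mulVec, Matrix.one_mulVec] at happ
  simp only [dotProduct_smul, smul_eq_mul] at happ
  set q : ℂ := dotProduct (star v) (TT n *ᵥ v) with hq
  set R : ℂ := dotProduct (star v) v with hR
  have happ2 : (c*c) * R + 4 * q = (((n:ℂ)+1)^2) * R := by
    linear_combination happ
  have hqnn : 0 ≤ q := TT_nonneg v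
  set rho : ℝ := ∑ f : Fin (n+1) → Fin 2, Complex.normSq (v f) with hrho
  have hRrho : R = (rho : ℂ) := by
    rw [hR, hrho, dotProduct]
    push_cast
    apply Finset.sum_congr rfl
    intro f _
    simp [Complex.normSq_eq_conj_mul_self]
  have hrhopos : 0 < rho := by
    have hex : ∃ f, v f ≠ 0 := by
      by_contra hcon
      push_neg at hcon
      exact hv0 (funext hcon)
    obtain ⟨f0, hf0⟩ := hex
    apply Finset.sum_pos'
    · intro f _; exact Complex.normSq_nonneg _
    · exact ⟨f0, Finset.mem_univ _, Complex.normSq_pos.mpr hf0⟩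
  -- extract real inequality
  have h4q : (4:ℂ) * q = ((((n:ℝ)+1)^2 - (4*lam+1)^2) * rho : ℝ) := by
    have : (4:ℂ) * q = (((n:ℂ)+1)^2) * R - (c*c) * R := by
      rw [← happ2]; ring
    rw [this, hRrho, hc]
    push_cast
    ring
  have hqreal : (0:ℝ) ≤ (((n:ℝ)+1)^2 - (4*lam+1)^2) * rho := by
    rw [← Complex.zero_le_real, ← h4q]
    have : (0:ℂ) ≤ 4 * q := by
      have h4 : (0:ℂ) ≤ 4 := by norm_num
      exact mul_nonneg h4 hqnn
    exact this
  have hsq : (4*lam+1)^2 ≤ ((n:ℝ)+1)^2 := by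
    nlinarith [hrhopos]
  have hn0 : (0:ℝ) ≤ (n:ℝ) := Nat.cast_nonneg n
  nlinarith [hsq, hn0]

end HstarAux


namespace HstarAux

variable {n : ℕ}

lemma heis_sum (p q : Fin 2) (u : Fin 2 → Fin 2 → ℂ) :
    ∑ a : Fin 2, ∑ b : Fin 2, heis4 (p, q) (a, b) * u a b
      = if p = q then u p q else 2 * u q p - u p q := by
  fin_cases p <;> fin_cases q <;>
    simp [heis4, Fin.sum_univ_two, PX, PY, PZ, Matrix.kroneckerMap_apply, Matrix.add_apply,
      Prod.ext_iff, Fin.ext_iff] <;> ring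

def asum (n : ℕ) (f : Fin (n+1) → Fin 2) : ℕ := ∑ j : Fin n, (f j.castSucc).val

noncomputable def gs (n : ℕ) : (Fin (n+1) → Fin 2) → ℂ := fun f =>
  if f (Fin.last n) = 1 ∧ asum n f = 0 then -(n:ℂ)
  else if f (Fin.last n) = 0 ∧ asum n f = 1 then 1 else 0

lemma fin2_cases (x : Fin 2) : x = 0 ∨ x = 1 := by fin_cases x <;> simp

lemma asum_update_last (f : Fin (n+1) → Fin 2) (b : Fin 2) :
    asum n (Function.update f (Fin.last n) b) = asum n f := by
  apply Finset.sum_congr rfl; intro j _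
  rw [Function.update_of_ne (castSucc_ne_last j)]

lemma asum_split (f : Fin (n+1) → Fin 2) (j : Fin n) :
    asum n f = (f j.castSucc).val + ∑ k ∈ Finset.univ.erase j, (f k.castSucc).val :=
  (Finset.add_sum_erase _ _ (Finset.mem_univ j)).symm

lemma asum_update_arm (f : Fin (n+1) → Fin 2) (j : Fin n) (a : Fin 2) :
    asum n (Function.update f j.castSucc a)
      = a.val + ∑ k ∈ Finset.univ.erase j, (f k.castSucc).val := by
  rw [asum_split (Function.update f j.castSucc a) j]
  congr 1
  · rw [Function.update_self]
  · apply Finset.sum_congr rfl; intro k hk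
    have hkj : k ≠ j := (Finset.mem_erase.mp hk).1
    rw [Function.update_of_ne (by simpa [Fin.castSucc_inj] using hkj)]

lemma gs_neg (f : Fin (n+1) → Fin 2) (h1 : f (Fin.last n) = 1) (h0 : asum n f = 0) :
    gs n f = -(n:ℂ) := by simp [gs, h1, h0]

lemma gs_one (f : Fin (n+1) → Fin 2) (h1 : f (Fin.last n) = 0) (h0 : asum n f = 1) :
    gs n f = 1 := by simp [gs, h1, h0]

lemma gs_zero_of_one (f : Fin (n+1) → Fin 2) (h1 : f (Fin.last n) = 1) (h0 : asum n f ≠ 0) :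
    gs n f = 0 := by simp [gs, h1, h0]

lemma gs_zero_of_zero (f : Fin (n+1) → Fin 2) (h1 : f (Fin.last n) = 0) (h0 : asum n f ≠ 1) :
    gs n f = 0 := by simp [gs, h1, h0]

lemma asum_cast (f : Fin (n+1) → Fin 2) :
    ∑ j : Fin n, (((f j.castSucc).val : ℕ) : ℂ) = ((asum n f : ℕ) : ℂ) := by
  rw [asum]
  push_cast
  rfl

set_option maxHeartbeats 1600000 in
lemma sum_T (f : Fin (n+1) → Fin 2) :
    ∑ j : Fin n, (if f j.castSucc = f (Fin.last n) then gs n f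
      else 2 * gs n (Function.update (Function.update f j.castSucc (f (Fin.last n)))
            (Fin.last n) (f j.castSucc)) - gs n f)
    = (-(n:ℂ) - 2) * gs n f := by
  rcases fin2_cases (f (Fin.last n)) with hy | hy
  · -- center = 0
    by_cases hS : asum n f = 1
    · -- exactly one arm is 1
      have hgsf : gs n f = 1 := gs_one f hy hS
      have hterm : ∀ j ∈ (Finset.univ : Finset (Fin n)),
          (if f j.castSucc = f (Fin.last n) then gs n f
            else 2 * gs n (Function.update (Function.update f j.castSucc (f (Fin.last n)))
                  (Fin.last n) (f j.castSucc)) - gs n f)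
          = 1 - (2*(n:ℂ)+2) * (((f j.castSucc).val : ℕ) : ℂ) := by
        intro j _
        rcases fin2_cases (f j.castSucc) with hx | hx
        · rw [hx, hy, if_pos rfl, hgsf]
          norm_num
        · rw [hx, hy, if_neg (by decide)]
          have hsw : gs n (Function.update (Function.update f j.castSucc (0:Fin 2))
              (Fin.last n) (1:Fin 2)) = -(n:ℂ) := by
            apply gs_neg
            · rw [Function.update_self]
            · rw [asum_update_last, asum_update_arm]
              have := asum_split f j
              rw [hS, hx] at this
              simp only [Fin.val_zero, Fin.val_one] at this ⊢
              omega
          rw [hsw, hgsf]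
          norm_num
          ring
      rw [Finset.sum_congr rfl hterm, Finset.sum_sub_distrib, Finset.sum_const,
        Finset.card_univ, Fintype.card_fin, ← Finset.mul_sum, asum_cast, hS, hgsf]
      push_cast
      ring
    · -- no eigen-component
      have hgsf : gs n f = 0 := gs_zero_of_zero f hy hS
      rw [hgsf]
      rw [Finset.sum_eq_zero]
      · ring
      intro j _
      rcases fin2_cases (f j.castSucc) with hx | hx
      · rw [hx, hy, if_pos rfl]
      · rw [hx, hy, if_neg (by decide)]
        have hsw : gs n (Function.update (Function.update f j.castSucc (0:Fin 2))
            (Fin.last n) (1:Fin 2)) = 0 := by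
          apply gs_zero_of_one
          · rw [Function.update_self]
          · rw [asum_update_last, asum_update_arm]
            have := asum_split f j
            rw [hx] at this
            simp only [Fin.val_zero, Fin.val_one] at this ⊢
            omega
        rw [hsw]
        ring
  · -- center = 1
    by_cases hS : asum n f = 0
    · -- all arms 0
      have hgsf : gs n f = -(n:ℂ) := gs_neg f hy hS
      have hall : ∀ j : Fin n, f j.castSucc = 0 := by
        intro j
        have := asum_split f j
        rw [hS] at this
        have hv : (f j.castSucc).val = 0 := by omega
        exact Fin.ext hv
      have hterm : ∀ j ∈ (Finset.univ : Finset (Fin n)),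
          (if f j.castSucc = f (Fin.last n) then gs n f
            else 2 * gs n (Function.update (Function.update f j.castSucc (f (Fin.last n)))
                  (Fin.last n) (f j.castSucc)) - gs n f)
          = (n:ℂ) + 2 := by
        intro j _
        rw [hall j, hy, if_neg (by decide)]
        have hsw : gs n (Function.update (Function.update f j.castSucc (1:Fin 2))
            (Fin.last n) (0:Fin 2)) = 1 := by
          apply gs_one
          · rw [Function.update_self]
          · rw [asum_update_last, asum_update_arm]
            have := asum_split f j
            rw [hS, hall j] at this
            simp only [Fin.val_zero, Fin.val_one] at this ⊢
            omega
        rw [hsw, hgsf]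
        ring
      rw [Finset.sum_congr rfl hterm, Finset.sum_const, Finset.card_univ, Fintype.card_fin,
        hgsf, nsmul_eq_mul]
      ring
    · have hgsf : gs n f = 0 := gs_zero_of_one f hy hS
      rw [hgsf]
      rw [Finset.sum_eq_zero]
      · ring
      intro j _
      rcases fin2_cases (f j.castSucc) with hx | hx
      · rw [hx, hy, if_neg (by decide)]
        have hsw : gs n (Function.update (Function.update f j.castSucc (1:Fin 2))
            (Fin.last n) (0:Fin 2)) = 0 := by
          apply gs_zero_of_zero
          · rw [Function.update_self]
          · rw [asum_update_last, asum_update_arm]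
            have := asum_split f j
            rw [hx] at this
            simp only [Fin.val_zero, Fin.val_one] at this ⊢
            omega
        rw [hsw]
        ring
      · rw [hx, hy, if_pos rfl]

set_option maxHeartbeats 1600000 in
lemma S1_mulVec_gs : S1 n *ᵥ gs n = (-(n:ℂ) - 2) • gs n := by
  ext f
  rw [S1, sum_mulVec', Finset.sum_apply]
  have hterm : ∀ j ∈ (Finset.univ : Finset (Fin n)),
      (embed2 j.castSucc (Fin.last n) heis4 *ᵥ gs n) f
      = (if f j.castSucc = f (Fin.last n) then gs n f
          else 2 * gs n (Function.update (Function.update f j.castSucc (f (Fin.last n)))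
                (Fin.last n) (f j.castSucc)) - gs n f) := by
    intro j _
    rw [embed2_mulVec (castSucc_ne_last j)]
    rw [heis_sum (f j.castSucc) (f (Fin.last n))
      (fun a b => gs n (Function.update (Function.update f j.castSucc a) (Fin.last n) b))]
    have hself : Function.update (Function.update f j.castSucc (f j.castSucc))
        (Fin.last n) (f (Fin.last n)) = f := by
      rw [Function.update_eq_self, Function.update_eq_self]
    by_cases hpq : f j.castSucc = f (Fin.last n)
    · rw [if_pos hpq, if_pos hpq, hself]
    · rw [if_neg hpq, if_neg hpq, hself]
  rw [Finset.sum_congr rfl hterm, sum_T f]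
  simp [smul_eq_mul]

lemma gs_ne_zero (hn : 1 ≤ n) : gs n ≠ (0 : (Fin (n+1) → Fin 2) → ℂ) := by
  intro hcon
  set f0 : Fin (n+1) → Fin 2 := fun i => if i = Fin.last n then 1 else 0 with hf0
  have h1 : f0 (Fin.last n) = 1 := by simp [hf0]
  have h0 : asum n f0 = 0 := by
    apply Finset.sum_eq_zero
    intro j _
    simp [hf0, castSucc_ne_last j]
  have := congrFun hcon f0
  rw [gs_neg f0 h1 h0] at this
  simp at this
  omega

lemma exists_eig (hn : 1 ≤ n) (h : (Hstar n).IsHermitian) :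
    ∃ i, h.eigenvalues i = -(((n:ℝ) + 2)/4) := by
  have hHgs : Hstar n *ᵥ gs n = ((-(((n:ℝ) + 2)/4) : ℝ) : ℂ) • gs n := by
    rw [Hstar_eq, Matrix.smul_mulVec, S1_mulVec_gs, smul_smul]
    congr 1
    push_cast
    ring
  set U : Matrix (Fin (n+1) → Fin 2) (Fin (n+1) → Fin 2) ℂ := ↑(h.eigenvectorUnitary) with hU
  have hdiag : star U * Hstar n * U = Matrix.diagonal (RCLike.ofReal ∘ h.eigenvalues) := by
    rw [← h.conjStarAlgAut_star_eigenvectorUnitary, Unitary.conjStarAlgAut_star_apply, hU]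
  have hUU : U * star U = 1 := Matrix.mem_unitaryGroup_iff.mp (h.eigenvectorUnitary).2
  set u : (Fin (n+1) → Fin 2) → ℂ := star U *ᵥ gs n with hu
  have hrec : gs n = U *ᵥ u := by
    rw [hu, Matrix.mulVec_mulVec, hUU, Matrix.one_mulVec]
  have hdv : Matrix.diagonal (RCLike.ofReal ∘ h.eigenvalues) *ᵥ u
      = ((-(((n:ℝ) + 2)/4) : ℝ) : ℂ) • u := by
    rw [← hdiag, ← Matrix.mulVec_mulVec, ← Matrix.mulVec_mulVec, ← hrec, hHgs,
      Matrix.mulVec_smul]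
  have hu0 : u ≠ 0 := by
    intro h0
    apply gs_ne_zero hn
    rw [hrec, h0, Matrix.mulVec_zero]
  obtain ⟨i, hi⟩ := Function.ne_iff.mp hu0
  refine ⟨i, ?_⟩
  have hcomp := congrFun hdv i
  rw [Matrix.mulVec_diagonal] at hcomp
  simp only [Function.comp_apply, Pi.smul_apply, smul_eq_mul] at hcomp
  have hcast : ((h.eigenvalues i : ℝ) : ℂ) = ((-(((n:ℝ) + 2)/4) : ℝ) : ℂ) :=
    mul_right_cancel₀ (by simpa using hi) hcomp
  exact_mod_cast hcast

end HstarAux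

/-- The ground-state energy of the Heisenberg star Hamiltonian on `N = n+1 ≥ 2` qubits
equals `−(N+1)/4 = −(n+2)/4`. -/
theorem hstar_ground_energy (n : ℕ) (hn : 1 ≤ n) (h : (Hstar n).IsHermitian) :
    lmin h = -(((n : ℝ) + 2) / 4) := by
  have hlb : ∀ i, -(((n:ℝ) + 2)/4) ≤ h.eigenvalues i := fun i => HstarAux.eig_lower n hn h i
  obtain ⟨i0, hi0⟩ := HstarAux.exists_eig hn h
  rw [lmin]
  apply le_antisymm
  · exact (ciInf_le ⟨-(((n:ℝ)+2)/4), fun x hx => by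
      obtain ⟨i, rfl⟩ := hx; exact hlb i⟩ i0).trans hi0.le
  · exact le_ciInf hlb
end

section
/- The largest eigenvalue of the star-sum state σ_star(N) = Σ_{j=1}^{N−1} |B_{11}⟩⟨B_{11}|_{j,N} ⊗ 𝟙_{[N]\{j,N}} on N qubits equals N/2. -/
open Matrix Kronecker ComplexOrder

namespace StarAux

variable {N : ℕ}

lemma fin2_cases (x : Fin 2) : x = 0 ∨ x = 1 := by omega

/-- Update a configuration at two sites. -/
def upd (k ℓ : Fin N) (f : Fin N → Fin 2) (a b : Fin 2) : Fin N → Fin 2 :=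
  Function.update (Function.update f k a) ℓ b

lemma upd_apply_ell (k ℓ : Fin N) (f : Fin N → Fin 2) (a b : Fin 2) :
    upd k ℓ f a b ℓ = b := Function.update_self _ _ _

lemma upd_apply_k {k ℓ : Fin N} (hkl : k ≠ ℓ) (f : Fin N → Fin 2) (a b : Fin 2) :
    upd k ℓ f a b k = a := by
  rw [upd, Function.update_of_ne hkl, Function.update_self]

lemma upd_apply_other {k ℓ i : Fin N} (hik : i ≠ k) (hil : i ≠ ℓ)
    (f : Fin N → Fin 2) (a b : Fin 2) : upd k ℓ f a b i = f i := by
  rw [upd, Function.update_of_ne hil, Function.update_of_ne hik]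

lemma upd_self {k ℓ : Fin N} (hkl : k ≠ ℓ) (f : Fin N → Fin 2) :
    upd k ℓ f (f k) (f ℓ) = f := by
  funext i
  by_cases hil : i = ℓ
  · subst hil; exact upd_apply_ell ..
  · by_cases hik : i = k
    · subst hik; exact upd_apply_k hkl ..
    · exact upd_apply_other hik hil ..

lemma upd_eq_self {k ℓ : Fin N} (hkl : k ≠ ℓ) {f : Fin N → Fin 2} {a b : Fin 2}
    (ha : f k = a) (hb : f ℓ = b) : upd k ℓ f a b = f := by
  subst ha; subst hb; exact upd_self hkl f

lemma upd_upd {k ℓ : Fin N} (hkl : k ≠ ℓ) (f : Fin N → Fin 2) (a b a' b' : Fin 2) :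
    upd k ℓ (upd k ℓ f a b) a' b' = upd k ℓ f a' b' := by
  funext i
  by_cases hil : i = ℓ
  · subst hil; rw [upd_apply_ell, upd_apply_ell]
  · by_cases hik : i = k
    · subst hik; rw [upd_apply_k hkl, upd_apply_k hkl]
    · rw [upd_apply_other hik hil, upd_apply_other hik hil, upd_apply_other hik hil]

lemma sum_agree {M : Type*} [AddCommMonoid M] {k ℓ : Fin N} (hkl : k ≠ ℓ)
    (f : Fin N → Fin 2) (F : (Fin N → Fin 2) → M) :
    (∑ g, if (∀ i, i ≠ k → i ≠ ℓ → f i = g i) then F g else 0)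
      = ∑ p : Fin 2 × Fin 2, F (upd k ℓ f p.1 p.2) := by
  classical
  rw [← Finset.sum_filter]
  refine Finset.sum_nbij' (fun g => (g k, g ℓ)) (fun p => upd k ℓ f p.1 p.2) ?_ ?_ ?_ ?_ ?_
  · intro a _; exact Finset.mem_univ _
  · intro p _
    simp only [Finset.mem_filter, Finset.mem_univ, true_and]
    intro i hik hil
    exact (upd_apply_other hik hil f p.1 p.2).symm
  · intro g hg
    simp only [Finset.mem_filter, Finset.mem_univ, true_and] at hg
    funext i
    by_cases hil : i = ℓ
    · subst hil; exact upd_apply_ell ..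
    · by_cases hik : i = k
      · subst hik; exact upd_apply_k hkl ..
      · exact (upd_apply_other hik hil ..).trans (hg i hik hil)
  · intro p _
    exact Prod.ext (upd_apply_k hkl ..) (upd_apply_ell ..)
  · intro g hg
    simp only [Finset.mem_filter, Finset.mem_univ, true_and] at hg
    congr 1
    funext i
    by_cases hil : i = ℓ
    · subst hil; exact (upd_apply_ell ..).symm
    · by_cases hik : i = k
      · subst hik; exact (upd_apply_k hkl ..).symm
      · exact ((upd_apply_other hik hil ..).trans (hg i hik hil)).symm

lemma sum_class_swap {M : Type*} [AddCommMonoid M] {k ℓ : Fin N} (hkl : k ≠ ℓ)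
    (a b a' b' : Fin 2) (F : (Fin N → Fin 2) → M) :
    (∑ f, if f k = a ∧ f ℓ = b then F f else 0)
      = ∑ f, if f k = a' ∧ f ℓ = b' then F (upd k ℓ f a b) else 0 := by
  classical
  rw [← Finset.sum_filter, ← Finset.sum_filter]
  refine Finset.sum_nbij' (fun f => upd k ℓ f a' b') (fun g => upd k ℓ g a b) ?_ ?_ ?_ ?_ ?_
  · intro f _
    simp only [Finset.mem_filter, Finset.mem_univ, true_and]
    exact ⟨upd_apply_k hkl .., upd_apply_ell ..⟩
  · intro g _
    simp only [Finset.mem_filter, Finset.mem_univ, true_and]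
    exact ⟨upd_apply_k hkl .., upd_apply_ell ..⟩
  · intro f hf
    simp only [Finset.mem_filter, Finset.mem_univ, true_and] at hf
    show upd k ℓ (upd k ℓ f a' b') a b = f
    rw [upd_upd hkl, upd_eq_self hkl hf.1 hf.2]
  · intro g hg
    simp only [Finset.mem_filter, Finset.mem_univ, true_and] at hg
    show upd k ℓ (upd k ℓ g a b) a' b' = g
    rw [upd_upd hkl, upd_eq_self hkl hg.1 hg.2]
  · intro f hf
    simp only [Finset.mem_filter, Finset.mem_univ, true_and] at hf
    show F f = F (upd k ℓ (upd k ℓ f a' b') a b)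
    rw [upd_upd hkl, upd_eq_self hkl hf.1 hf.2]

lemma bell11_eq (p : Fin 2 × Fin 2) :
    bell 1 1 p = (if p = (0,1) then 1 else if p = (1,0) then -1 else 0) / (Real.sqrt 2 : ℂ) := by
  obtain ⟨a, b⟩ := p
  rcases fin2_cases a with ha | ha <;> rcases fin2_cases b with hb | hb <;>
    subst ha <;> subst hb <;> simp [bell, Prod.ext_iff]

lemma bellProj_apply (p q : Fin 2 × Fin 2) :
    bellProj 1 1 p q = bell 1 1 p * (starRingEnd ℂ) (bell 1 1 q) := rfl

lemma conj_bell11 (p : Fin 2 × Fin 2) :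
    (starRingEnd ℂ) (bell 1 1 p) = bell 1 1 p := by
  rw [bell11_eq, map_div₀, Complex.conj_ofReal, apply_ite (starRingEnd ℂ),
    apply_ite (starRingEnd ℂ)]
  simp

lemma sc_mul_sc : (Real.sqrt 2 : ℂ) * (Real.sqrt 2 : ℂ) = 2 := by
  rw [← Complex.ofReal_mul, Real.mul_self_sqrt (by norm_num)]
  norm_num

section Spectral

variable {m : Type*} [Fintype m] [DecidableEq m]

lemma quad_eq_sum_eigen [Nonempty m] {A : Matrix m m ℂ} (hA : A.IsHermitian) (v : m → ℂ) :
    ∃ w : m → ℂ, (∑ i, Complex.normSq (w i) = ∑ i, Complex.normSq (v i)) ∧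
      star v ⬝ᵥ A *ᵥ v = ∑ i, (hA.eigenvalues i : ℂ) * (Complex.normSq (w i) : ℂ) := by
  set U : Matrix m m ℂ := (hA.eigenvectorUnitary : Matrix m m ℂ) with hUdef
  have hU : U * star U = 1 := Matrix.mem_unitaryGroup_iff.mp (hA.eigenvectorUnitary).2
  set w : m → ℂ := star U *ᵥ v with hw
  have hsw : star w = star v ᵥ* U := by
    rw [hw, star_mulVec, Matrix.star_eq_conjTranspose, conjTranspose_conjTranspose]
  refine ⟨w, ?_, ?_⟩
  · have h1 : star w ⬝ᵥ w = star v ⬝ᵥ v := by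
      rw [hsw, hw, ← dotProduct_mulVec, mulVec_mulVec, hU, one_mulVec]
    have h2 : ∀ u : m → ℂ, star u ⬝ᵥ u = ((∑ i, Complex.normSq (u i) : ℝ) : ℂ) := by
      intro u
      rw [dotProduct]
      push_cast
      apply Finset.sum_congr rfl
      intro i _
      rw [Pi.star_apply, RCLike.star_def, ← Complex.normSq_eq_conj_mul_self]
    rw [h2, h2] at h1
    exact_mod_cast h1
  · conv_lhs => rw [hA.spectral_theorem, Unitary.conjStarAlgAut_apply, ← hUdef]
    rw [← mulVec_mulVec, ← mulVec_mulVec, dotProduct_mulVec, ← hsw, ← hw]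
    rw [dotProduct]
    apply Finset.sum_congr rfl
    intro i _
    rw [mulVec_diagonal, Pi.star_apply, RCLike.star_def, Function.comp_apply]
    calc (starRingEnd ℂ) (w i) * ((hA.eigenvalues i : ℂ) * w i)
        = (hA.eigenvalues i : ℂ) * ((starRingEnd ℂ) (w i) * w i) := by ring
      _ = (hA.eigenvalues i : ℂ) * (Complex.normSq (w i) : ℂ) := by
          rw [← Complex.normSq_eq_conj_mul_self]


lemma rayleigh_le_iSup [Nonempty m] {A : Matrix m m ℂ} (hA : A.IsHermitian) (v : m → ℂ) :
    (star v ⬝ᵥ A *ᵥ v).re ≤ (⨆ i, hA.eigenvalues i) * ∑ i, Complex.normSq (v i) := by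
  obtain ⟨w, hwnorm, hquad⟩ := quad_eq_sum_eigen hA v
  rw [hquad]
  have : (∑ i, (hA.eigenvalues i : ℂ) * (Complex.normSq (w i) : ℂ))
      = ((∑ i, hA.eigenvalues i * Complex.normSq (w i) : ℝ) : ℂ) := by push_cast; rfl
  rw [this, Complex.ofReal_re, ← hwnorm, Finset.mul_sum]
  apply Finset.sum_le_sum
  intro i _
  exact mul_le_mul_of_nonneg_right
    (le_ciSup (Set.Finite.bddAbove (Set.finite_range _)) i) (Complex.normSq_nonneg _)

lemma eigenvalue_le_of_quad {A : Matrix m m ℂ} (hA : A.IsHermitian) {c : ℝ}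
    (hQ : ∀ v : m → ℂ, (star v ⬝ᵥ A *ᵥ v).re ≤ c * ∑ i, Complex.normSq (v i)) (i : m) :
    hA.eigenvalues i ≤ c := by
  have h1 := hA.eigenvalues_eq i
  set u : m → ℂ := ⇑(hA.eigenvectorBasis i) with hu
  have hnorm : ∑ j, Complex.normSq (u j) = 1 := by
    have h2 : ‖hA.eigenvectorBasis i‖ = 1 := hA.eigenvectorBasis.orthonormal.1 i
    rw [EuclideanSpace.norm_eq] at h2
    have h3 : ∑ j, ‖u j‖ ^ 2 = 1 := by
      have := congrArg (· ^ 2) h2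
      simpa [Real.sq_sqrt (Finset.sum_nonneg fun j _ => sq_nonneg _)] using this
    rw [← h3]
    apply Finset.sum_congr rfl
    intro j _
    rw [Complex.normSq_eq_norm_sq]
  have h4 : hA.eigenvalues i = (star u ⬝ᵥ A *ᵥ u).re := h1
  rw [h4]
  calc (star u ⬝ᵥ A *ᵥ u).re ≤ c * ∑ j, Complex.normSq (u j) := hQ u
    _ = c := by rw [hnorm, mul_one]

end Spectral

lemma quad_embed {k ℓ : Fin N} (hkl : k ≠ ℓ) (v : (Fin N → Fin 2) → ℂ) :
    star v ⬝ᵥ (embed2 k ℓ (bellProj 1 1)) *ᵥ v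
      = ∑ f, if f k = 0 ∧ f ℓ = 1 then
          ((Complex.normSq (v f - v (upd k ℓ f 1 0)) : ℂ) / 2) else 0 := by
  classical
  -- Step 1: collapse the g-sum
  have h1 : star v ⬝ᵥ (embed2 k ℓ (bellProj 1 1)) *ᵥ v
      = ∑ f, (starRingEnd ℂ) (v f) * bell 1 1 (f k, f ℓ)
          * ((v (upd k ℓ f 0 1) - v (upd k ℓ f 1 0)) / (Real.sqrt 2 : ℂ)) := by
    have inner : ∀ f : Fin N → Fin 2,
        (∑ g, embed2 k ℓ (bellProj 1 1) f g * v g)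
          = bell 1 1 (f k, f ℓ) * ((v (upd k ℓ f 0 1) - v (upd k ℓ f 1 0)) / (Real.sqrt 2 : ℂ)) := by
      intro f
      have : (∑ g, embed2 k ℓ (bellProj 1 1) f g * v g)
          = ∑ g, if (∀ i, i ≠ k → i ≠ ℓ → f i = g i) then
              bellProj 1 1 (f k, f ℓ) (g k, g ℓ) * v g else 0 := by
        apply Finset.sum_congr rfl
        intro g _
        simp only [embed2, mul_ite, mul_one, mul_zero, ite_mul, zero_mul]
      rw [this, sum_agree hkl]
      have : ∀ p : Fin 2 × Fin 2,
          bellProj 1 1 (f k, f ℓ) ((upd k ℓ f p.1 p.2) k, (upd k ℓ f p.1 p.2) ℓ)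
            * v (upd k ℓ f p.1 p.2)
          = bellProj 1 1 (f k, f ℓ) p * v (upd k ℓ f p.1 p.2) := by
        intro p
        rw [upd_apply_k hkl, upd_apply_ell]
      rw [Finset.sum_congr rfl fun p _ => this p]
      rw [Fintype.sum_prod_type]
      simp only [Fin.sum_univ_two, bellProj_apply, conj_bell11, bell11_eq, Prod.ext_iff]
      norm_num
      ring
    rw [dotProduct, Finset.sum_congr rfl (fun f _ => ?_)]
    rw [Matrix.mulVec, dotProduct]
    rw [inner f]
    simp only [Pi.star_apply, RCLike.star_def]
    ring
  rw [h1]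
  have hsplit : (∑ f, (starRingEnd ℂ) (v f) * bell 1 1 (f k, f ℓ)
        * ((v (upd k ℓ f 0 1) - v (upd k ℓ f 1 0)) / (Real.sqrt 2 : ℂ)))
      = (∑ f, if f k = 0 ∧ f ℓ = 1 then (starRingEnd ℂ) (v f) * bell 1 1 (f k, f ℓ)
          * ((v (upd k ℓ f 0 1) - v (upd k ℓ f 1 0)) / (Real.sqrt 2 : ℂ)) else 0)
        + (∑ f, if f k = 1 ∧ f ℓ = 0 then (starRingEnd ℂ) (v f) * bell 1 1 (f k, f ℓ)
          * ((v (upd k ℓ f 0 1) - v (upd k ℓ f 1 0)) / (Real.sqrt 2 : ℂ)) else 0) := by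
    rw [← Finset.sum_add_distrib]
    apply Finset.sum_congr rfl
    intro f _
    rcases fin2_cases (f k) with h1|h1 <;> rcases fin2_cases (f ℓ) with h2|h2 <;>
      simp [h1, h2, bell11_eq, Prod.ext_iff]
  rw [hsplit, sum_class_swap hkl 1 0 0 1
    (fun f => (starRingEnd ℂ) (v f) * bell 1 1 (f k, f ℓ)
      * ((v (upd k ℓ f 0 1) - v (upd k ℓ f 1 0)) / (Real.sqrt 2 : ℂ))),
    ← Finset.sum_add_distrib]
  apply Finset.sum_congr rfl
  intro f _
  by_cases hf : f k = 0 ∧ f ℓ = 1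
  · obtain ⟨hk0, hl1⟩ := hf
    simp only [if_pos (show f k = 0 ∧ f ℓ = 1 from ⟨hk0, hl1⟩)]
    have e1 : upd k ℓ f 0 1 = f := upd_eq_self hkl hk0 hl1
    have e2 : upd k ℓ (upd k ℓ f 1 0) 0 1 = f := by rw [upd_upd hkl]; exact e1
    have e3 : upd k ℓ (upd k ℓ f 1 0) 1 0 = upd k ℓ f 1 0 := upd_upd hkl ..
    have bk : (upd k ℓ f 1 0) k = 1 := upd_apply_k hkl ..
    have bl : (upd k ℓ f 1 0) ℓ = 0 := upd_apply_ell ..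
    rw [e1, e2, e3, hk0, hl1, bk, bl, bell11_eq, bell11_eq]
    have hns : ((Complex.normSq (v f - v (upd k ℓ f 1 0)) : ℂ))
        = (starRingEnd ℂ) (v f - v (upd k ℓ f 1 0)) * (v f - v (upd k ℓ f 1 0)) := by
      rw [Complex.normSq_eq_conj_mul_self]
    rw [hns, map_sub]
    simp only [Prod.mk.injEq, and_self, if_true, one_ne_zero, and_false, false_and, if_false,
      zero_ne_one]
    have hsne : (Real.sqrt 2 : ℂ) ≠ 0 :=
      Complex.ofReal_ne_zero.mpr (by positivity)
    have hsq : (Real.sqrt 2 : ℂ) ^ 2 = 2 := by rw [sq, sc_mul_sc]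
    field_simp
    ring_nf
    rw [hsq]
  · simp only [if_neg hf]
    ring

/-- The quadratic form of `sigmaStar` as a sum over "edges". -/
lemma quad_sigma (n : ℕ) (v : (Fin (n+1) → Fin 2) → ℂ) :
    star v ⬝ᵥ (sigmaStar n) *ᵥ v
      = ((∑ j : Fin n, ∑ f, if f j.castSucc = 0 ∧ f (Fin.last n) = 1 then
          (Complex.normSq (v f - v (upd j.castSucc (Fin.last n) f 1 0)) / 2) else 0 : ℝ) : ℂ) := by
  have hmv : (∑ j : Fin n, embed2 j.castSucc (Fin.last n) (bellProj 1 1)) *ᵥ v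
      = ∑ j : Fin n, embed2 j.castSucc (Fin.last n) (bellProj 1 1) *ᵥ v :=
    map_sum (AddMonoidHom.mk' (fun M : Matrix (Fin (n+1) → Fin 2) (Fin (n+1) → Fin 2) ℂ => M *ᵥ v)
      (fun A B => Matrix.add_mulVec A B v)) _ _
  have hds : star v ⬝ᵥ (∑ j : Fin n, embed2 j.castSucc (Fin.last n) (bellProj 1 1) *ᵥ v)
      = ∑ j : Fin n, star v ⬝ᵥ embed2 j.castSucc (Fin.last n) (bellProj 1 1) *ᵥ v :=
    map_sum (AddMonoidHom.mk' (fun u : (Fin (n+1) → Fin 2) → ℂ => star v ⬝ᵥ u)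
      (fun a b => dotProduct_add (star v) a b)) _ _
  rw [sigmaStar, hmv, hds]
  have hterm : ∀ j : Fin n,
      star v ⬝ᵥ embed2 j.castSucc (Fin.last n) (bellProj 1 1) *ᵥ v
        = ∑ f, if f j.castSucc = 0 ∧ f (Fin.last n) = 1 then
            ((Complex.normSq (v f - v (upd j.castSucc (Fin.last n) f 1 0)) : ℂ) / 2) else 0 :=
    fun j => quad_embed (Fin.castSucc_lt_last j).ne v
  rw [Finset.sum_congr rfl fun j _ => hterm j]
  push_cast
  apply Finset.sum_congr rfl
  intro j _
  apply Finset.sum_congr rfl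
  intro f _
  split <;> simp


lemma amgm (a b : ℂ) {p q : ℝ} (hp : 0 < p) (hq : 0 < q) :
    Complex.normSq (a - b) ≤ ((p+q)/q) * Complex.normSq a + ((p+q)/p) * Complex.normSq b := by
  have hx : (0:ℝ) ≤ ‖a‖ := norm_nonneg a
  have hy : (0:ℝ) ≤ ‖b‖ := norm_nonneg b
  have h1 : ‖a - b‖ ^ 2 ≤ (‖a‖ + ‖b‖) ^ 2 := by
    have := norm_sub_le a b
    nlinarith [norm_nonneg (a - b)]
  have key : 2 * ‖a‖ * ‖b‖ ≤ (p/q) * ‖a‖^2 + (q/p) * ‖b‖^2 := by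
    rw [div_mul_eq_mul_div, div_mul_eq_mul_div, div_add_div _ _ (ne_of_gt hq) (ne_of_gt hp),
      le_div_iff₀ (by positivity)]
    nlinarith [sq_nonneg (p * ‖a‖ - q * ‖b‖)]
  have e1 : Complex.normSq (a - b) = ‖a - b‖ ^ 2 := by
    rw [Complex.normSq_eq_norm_sq]
  have e2 : Complex.normSq a = ‖a‖ ^ 2 := by
    rw [Complex.normSq_eq_norm_sq]
  have e3 : Complex.normSq b = ‖b‖ ^ 2 := by
    rw [Complex.normSq_eq_norm_sq]
  rw [e1, e2, e3, add_div, div_self (ne_of_gt hq), add_div, div_self (ne_of_gt hp)]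
  nlinarith [key, h1]

lemma coef_bound {c d X e : ℝ} (hc : 0 ≤ c) (hcd : c ≤ d) (hX : 0 ≤ X) (he : 0 ≤ e) :
    c * (e / d * X) ≤ e * X := by
  rcases eq_or_ne d 0 with hd | hd
  · simp [hd]
    positivity
  · have hdpos : 0 < d := lt_of_le_of_ne (hc.trans hcd) (Ne.symm hd)
    calc c * (e / d * X) ≤ d * (e / d * X) :=
          mul_le_mul_of_nonneg_right hcd (by positivity)
      _ = e * X := by field_simp

variable {n : ℕ}

/-- number of peripheral spins equal to 1 -/
def kk (n : ℕ) (f : Fin (n+1) → Fin 2) : ℕ :=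
  (Finset.univ.filter (fun i : Fin n => f i.castSucc = 1)).card

lemma kk_le (f : Fin (n+1) → Fin 2) : kk n f ≤ n := by
  classical
  simpa [kk] using (Finset.card_filter_le Finset.univ (fun i : Fin n => f i.castSucc = 1))

lemma kk_lt {j : Fin n} {f : Fin (n+1) → Fin 2} (hj : f j.castSucc = 0) : kk n f < n := by
  classical
  have hjmem : j ∉ Finset.univ.filter (fun i : Fin n => f i.castSucc = 1) := by
    simp [hj]
  have : (Finset.univ.filter (fun i : Fin n => f i.castSucc = 1)) ⊂ Finset.univ :=
    ⟨Finset.subset_univ _, fun hsub => hjmem (hsub (Finset.mem_univ j))⟩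
  have := Finset.card_lt_card this
  simpa [kk, Finset.card_univ] using this

lemma card_zero_filter (f : Fin (n+1) → Fin 2) :
    (Finset.univ.filter (fun j : Fin n => f j.castSucc = 0)).card = n - kk n f := by
  classical
  have hsplit := Finset.card_filter_add_card_filter_not
    (s := (Finset.univ : Finset (Fin n))) (p := fun i : Fin n => f i.castSucc = 1)
  have hiff : ∀ i : Fin n, ¬ (f i.castSucc = 1) ↔ f i.castSucc = 0 := by
    intro i; omega
  rw [Finset.filter_congr (fun i _ => hiff i)] at hsplit
  simp only [Finset.card_univ, Fintype.card_fin] at hsplit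
  unfold kk
  omega

lemma kk_upd {j : Fin n} {g : Fin (n+1) → Fin 2} (hg : g j.castSucc = 1) :
    kk n (upd j.castSucc (Fin.last n) g 0 1) + 1 = kk n g := by
  classical
  have hkl : (j.castSucc : Fin (n+1)) ≠ Fin.last n := (Fin.castSucc_lt_last j).ne
  have hfil : (Finset.univ.filter
      (fun i : Fin n => (upd j.castSucc (Fin.last n) g 0 1) i.castSucc = 1))
      = (Finset.univ.filter (fun i : Fin n => g i.castSucc = 1)).erase j := by
    ext i
    simp only [Finset.mem_filter, Finset.mem_univ, true_and, Finset.mem_erase]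
    by_cases hij : i = j
    · subst hij
      rw [upd_apply_k hkl]
      simp
    · rw [upd_apply_other (fun hcc => hij (Fin.castSucc_injective n hcc))
        (Fin.castSucc_lt_last i).ne]
      simp [hij]
  have hjmem : j ∈ Finset.univ.filter (fun i : Fin n => g i.castSucc = 1) := by
    simp [hg]
  rw [kk, hfil, Finset.card_erase_of_mem hjmem]
  have : 1 ≤ (Finset.univ.filter (fun i : Fin n => g i.castSucc = 1)).card :=
    Finset.card_pos.mpr ⟨j, hjmem⟩
  unfold kk
  omega

lemma edge_sum_le (n : ℕ) (v : (Fin (n+1) → Fin 2) → ℂ) :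
    (∑ j : Fin n, ∑ f, if f j.castSucc = 0 ∧ f (Fin.last n) = 1 then
        Complex.normSq (v f - v (upd j.castSucc (Fin.last n) f 1 0)) else 0)
      ≤ ((n : ℝ) + 1) * ∑ f, Complex.normSq (v f) := by
  classical
  have step1 : (∑ j : Fin n, ∑ f, if f j.castSucc = 0 ∧ f (Fin.last n) = 1 then
        Complex.normSq (v f - v (upd j.castSucc (Fin.last n) f 1 0)) else 0)
      ≤ (∑ j : Fin n, ∑ f, if f j.castSucc = 0 ∧ f (Fin.last n) = 1 then
          ((n:ℝ)+1) / ((n:ℝ) - kk n f) * Complex.normSq (v f) else 0)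
        + (∑ j : Fin n, ∑ f, if f j.castSucc = 0 ∧ f (Fin.last n) = 1 then
          ((n:ℝ)+1) / ((kk n f : ℝ)+1)
            * Complex.normSq (v (upd j.castSucc (Fin.last n) f 1 0)) else 0) := by
    rw [← Finset.sum_add_distrib]
    apply Finset.sum_le_sum
    intro j _
    rw [← Finset.sum_add_distrib]
    apply Finset.sum_le_sum
    intro f _
    by_cases hc : f j.castSucc = 0 ∧ f (Fin.last n) = 1
    · simp only [if_pos hc]
      have hq : (0:ℝ) < (n:ℝ) - kk n f :=
        sub_pos.mpr (Nat.cast_lt.mpr (kk_lt hc.1))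
      have hp : (0:ℝ) < (kk n f : ℝ) + 1 := by positivity
      have h := amgm (v f) (v (upd j.castSucc (Fin.last n) f 1 0)) hp hq
      have e : ((kk n f : ℝ) + 1) + ((n:ℝ) - kk n f) = (n:ℝ) + 1 := by ring
      rw [e] at h
      exact h
    · simp [hc]
  have step2 : (∑ j : Fin n, ∑ f, if f j.castSucc = 0 ∧ f (Fin.last n) = 1 then
        ((n:ℝ)+1) / ((n:ℝ) - kk n f) * Complex.normSq (v f) else 0)
      ≤ ∑ f, if f (Fin.last n) = 1 then ((n:ℝ)+1) * Complex.normSq (v f) else 0 := by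
    rw [Finset.sum_comm]
    apply Finset.sum_le_sum
    intro f _
    rw [← Finset.sum_filter, Finset.sum_const, nsmul_eq_mul]
    by_cases hfc : f (Fin.last n) = 1
    · rw [if_pos hfc]
      have hcard : (((Finset.univ.filter
            (fun j : Fin n => f j.castSucc = 0 ∧ f (Fin.last n) = 1)).card : ℝ))
          ≤ (n:ℝ) - kk n f := by
        have h1 : (Finset.univ.filter
            (fun j : Fin n => f j.castSucc = 0 ∧ f (Fin.last n) = 1)).card ≤ n - kk n f :=
          le_of_le_of_eq (Finset.card_le_card (Finset.monotone_filter_right _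
            (fun j _ hj => hj.1))) (card_zero_filter f)
        have h2 := kk_le (n := n) f
        calc (((Finset.univ.filter
              (fun j : Fin n => f j.castSucc = 0 ∧ f (Fin.last n) = 1)).card : ℝ))
            ≤ ((n - kk n f : ℕ) : ℝ) := Nat.cast_le.mpr h1
          _ = (n:ℝ) - kk n f := by rw [Nat.cast_sub h2]
      exact coef_bound (Nat.cast_nonneg _) hcard (Complex.normSq_nonneg _) (by positivity)
    · have hempty : (Finset.univ.filter
          (fun j : Fin n => f j.castSucc = 0 ∧ f (Fin.last n) = 1)) = ∅ :=
        Finset.filter_false_of_mem (fun j _ hpj => hfc hpj.2)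
      rw [hempty, if_neg hfc]
      simp
  have step3 : (∑ j : Fin n, ∑ f, if f j.castSucc = 0 ∧ f (Fin.last n) = 1 then
        ((n:ℝ)+1) / ((kk n f : ℝ)+1)
          * Complex.normSq (v (upd j.castSucc (Fin.last n) f 1 0)) else 0)
      = ∑ j : Fin n, ∑ g, if g j.castSucc = 1 ∧ g (Fin.last n) = 0 then
          ((n:ℝ)+1) / (kk n g : ℝ) * Complex.normSq (v g) else 0 := by
    apply Finset.sum_congr rfl
    intro j _
    have hkl : (j.castSucc : Fin (n+1)) ≠ Fin.last n := (Fin.castSucc_lt_last j).ne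
    rw [sum_class_swap hkl 0 1 1 0 (fun f => ((n:ℝ)+1) / ((kk n f : ℝ)+1)
      * Complex.normSq (v (upd j.castSucc (Fin.last n) f 1 0)))]
    apply Finset.sum_congr rfl
    intro g _
    by_cases hg : g j.castSucc = 1 ∧ g (Fin.last n) = 0
    · rw [if_pos hg, if_pos hg]
      have e1 : upd j.castSucc (Fin.last n) (upd j.castSucc (Fin.last n) g 0 1) 1 0 = g := by
        rw [upd_upd hkl]; exact upd_eq_self hkl hg.1 hg.2
      have e2 : ((kk n (upd j.castSucc (Fin.last n) g 0 1) : ℝ) + 1) = (kk n g : ℝ) := by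
        exact_mod_cast congrArg (Nat.cast (R := ℝ)) (kk_upd hg.1)
      show ((n:ℝ)+1) / ((kk n (upd j.castSucc (Fin.last n) g 0 1) : ℝ)+1)
          * Complex.normSq (v (upd j.castSucc (Fin.last n)
              (upd j.castSucc (Fin.last n) g 0 1) 1 0))
        = ((n:ℝ)+1) / (kk n g : ℝ) * Complex.normSq (v g)
      rw [e1, e2]
    · rw [if_neg hg, if_neg hg]
  have step4 : (∑ j : Fin n, ∑ g, if g j.castSucc = 1 ∧ g (Fin.last n) = 0 then
        ((n:ℝ)+1) / (kk n g : ℝ) * Complex.normSq (v g) else 0)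
      ≤ ∑ g, if g (Fin.last n) = 0 then ((n:ℝ)+1) * Complex.normSq (v g) else 0 := by
    rw [Finset.sum_comm]
    apply Finset.sum_le_sum
    intro g _
    rw [← Finset.sum_filter, Finset.sum_const, nsmul_eq_mul]
    by_cases hgc : g (Fin.last n) = 0
    · rw [if_pos hgc]
      have hcard : (((Finset.univ.filter
            (fun j : Fin n => g j.castSucc = 1 ∧ g (Fin.last n) = 0)).card : ℝ))
          ≤ (kk n g : ℝ) := by
        have h1 : (Finset.univ.filter
            (fun j : Fin n => g j.castSucc = 1 ∧ g (Fin.last n) = 0)).card ≤ kk n g := by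
          unfold kk
          exact Finset.card_le_card (Finset.monotone_filter_right _ (fun j _ hj => hj.1))
        exact_mod_cast Nat.cast_le.mpr h1
      exact coef_bound (Nat.cast_nonneg _) hcard (Complex.normSq_nonneg _) (by positivity)
    · have hempty : (Finset.univ.filter
          (fun j : Fin n => g j.castSucc = 1 ∧ g (Fin.last n) = 0)) = ∅ :=
        Finset.filter_false_of_mem (fun j _ hpj => hgc hpj.2)
      rw [hempty, if_neg hgc]
      simp
  have final : (∑ f, if f (Fin.last n) = 1 then ((n:ℝ)+1) * Complex.normSq (v f) else 0)
      + (∑ f, if f (Fin.last n) = 0 then ((n:ℝ)+1) * Complex.normSq (v f) else 0)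
      = ((n:ℝ)+1) * ∑ f, Complex.normSq (v f) := by
    rw [← Finset.sum_add_distrib, Finset.mul_sum]
    apply Finset.sum_congr rfl
    intro f _
    rcases fin2_cases (f (Fin.last n)) with hf | hf <;> simp [hf]
  linarith [step1, step2, step3.le, step3.ge, step4]

/-! ### The trial vector attaining the maximum -/

def base (n : ℕ) : Fin (n+1) → Fin 2 := fun i => if i = Fin.last n then 1 else 0

def ev (n : ℕ) (j : Fin n) : Fin (n+1) → Fin 2 := fun i => if i = j.castSucc then 1 else 0

noncomputable def v0 (n : ℕ) : (Fin (n+1) → Fin 2) → ℂ := fun f =>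
  (if f = base n then (n:ℂ) else 0) - ∑ j : Fin n, (if f = ev n j then 1 else 0)

lemma base_ne_ev (j : Fin n) : base n ≠ ev n j := by
  intro hcontra
  have := congrFun hcontra (Fin.last n)
  simp [base, ev, (Fin.castSucc_lt_last j).ne'] at this

lemma ev_inj {j j' : Fin n} (hjj : ev n j = ev n j') : j = j' := by
  by_contra hne
  have := congrFun hjj j.castSucc
  simp [ev, Fin.castSucc_inj, hne] at this

lemma v0_base : v0 n (base n) = (n:ℂ) := by
  rw [v0, if_pos rfl]
  rw [Finset.sum_eq_zero (fun j _ => if_neg (base_ne_ev j))]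
  ring

lemma v0_ev (j : Fin n) : v0 n (ev n j) = -1 := by
  rw [v0, if_neg (fun hc => base_ne_ev j hc.symm)]
  rw [Finset.sum_eq_single j (fun j' _ hjj => if_neg (fun hc => hjj (ev_inj hc.symm)))
    (fun hmem => absurd (Finset.mem_univ j) hmem), if_pos rfl]
  ring

lemma v0_other {f : Fin (n+1) → Fin 2} (hb : f ≠ base n) (he : ∀ j, f ≠ ev n j) :
    v0 n f = 0 := by
  rw [v0, if_neg hb, Finset.sum_eq_zero (fun j _ => if_neg (he j))]
  ring

lemma norm_v0 (n : ℕ) : ∑ f, Complex.normSq (v0 n f) = (n:ℝ)^2 + n := by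
  classical
  have hpt : ∀ f, Complex.normSq (v0 n f)
      = (if f = base n then (n:ℝ)^2 else 0) + ∑ j : Fin n, (if f = ev n j then (1:ℝ) else 0) := by
    intro f
    by_cases hb : f = base n
    · subst hb
      rw [v0_base, if_pos rfl, Finset.sum_eq_zero (fun j _ => if_neg (base_ne_ev j))]
      have : ((n:ℕ):ℂ) = (((n:ℕ):ℝ):ℂ) := by push_cast; ring
      rw [this, Complex.normSq_ofReal]
      ring
    · by_cases he : ∃ j, f = ev n j
      · obtain ⟨j0, hj0⟩ := he
        subst hj0
        rw [v0_ev, if_neg hb]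
        rw [Finset.sum_eq_single j0 (fun j' _ hjj => if_neg (fun hc => hjj (ev_inj hc.symm)))
          (fun hmem => absurd (Finset.mem_univ j0) hmem), if_pos rfl]
        simp [Complex.normSq]
      · push_neg at he
        rw [v0_other hb he, if_neg hb, Finset.sum_eq_zero (fun j _ => if_neg (he j))]
        simp
  rw [Finset.sum_congr rfl (fun f _ => hpt f), Finset.sum_add_distrib]
  congr 1
  · simp
  · rw [Finset.sum_comm]
    have : ∀ j : Fin n, (∑ f, if f = ev n j then (1:ℝ) else 0) = 1 := by
      intro j
      simp
    rw [Finset.sum_congr rfl (fun j _ => this j)]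
    simp

lemma base_castSucc (j : Fin n) : base n j.castSucc = 0 := by
  simp [base, (Fin.castSucc_lt_last j).ne]

lemma base_last : base n (Fin.last n) = 1 := by simp [base]

lemma upd_base (j : Fin n) : upd j.castSucc (Fin.last n) (base n) 1 0 = ev n j := by
  have hkl : (j.castSucc : Fin (n+1)) ≠ Fin.last n := (Fin.castSucc_lt_last j).ne
  funext i
  by_cases hil : i = Fin.last n
  · subst hil
    rw [upd_apply_ell]
    simp [ev, (Fin.castSucc_lt_last j).ne']
  · by_cases hik : i = j.castSucc
    · subst hik
      rw [upd_apply_k hkl]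
      simp [ev]
    · rw [upd_apply_other hik hil]
      simp [base, ev, hil, hik]

lemma edge_sum_v0 (n : ℕ) :
    (n:ℝ) * ((n:ℝ)+1)^2 ≤ ∑ j : Fin n, ∑ f,
      if f j.castSucc = 0 ∧ f (Fin.last n) = 1 then
        Complex.normSq (v0 n f - v0 n (upd j.castSucc (Fin.last n) f 1 0)) else 0 := by
  classical
  have per : ∀ j : Fin n, ((n:ℝ)+1)^2 ≤ ∑ f,
      if f j.castSucc = 0 ∧ f (Fin.last n) = 1 then
        Complex.normSq (v0 n f - v0 n (upd j.castSucc (Fin.last n) f 1 0)) else 0 := by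
    intro j
    have hterm : (if (base n) j.castSucc = 0 ∧ (base n) (Fin.last n) = 1 then
        Complex.normSq (v0 n (base n) - v0 n (upd j.castSucc (Fin.last n) (base n) 1 0)) else 0)
        = ((n:ℝ)+1)^2 := by
      rw [if_pos ⟨base_castSucc j, base_last⟩, upd_base, v0_base, v0_ev]
      have : ((n:ℕ):ℂ) - (-1) = ((((n:ℕ):ℝ)+1 : ℝ) : ℂ) := by push_cast; ring
      rw [this, Complex.normSq_ofReal]
      ring
    calc ((n:ℝ)+1)^2 = _ := hterm.symm
      _ ≤ _ := Finset.single_le_sum (f := fun f =>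
          if f j.castSucc = 0 ∧ f (Fin.last n) = 1 then
            Complex.normSq (v0 n f - v0 n (upd j.castSucc (Fin.last n) f 1 0)) else 0)
          (fun f _ => by
            by_cases hcond : f j.castSucc = 0 ∧ f (Fin.last n) = 1
            · simp only [if_pos hcond]; exact Complex.normSq_nonneg _
            · simp only [if_neg hcond]; exact le_refl 0) (Finset.mem_univ (base n))
  calc (n:ℝ) * ((n:ℝ)+1)^2 = ∑ _j : Fin n, ((n:ℝ)+1)^2 := by
        rw [Finset.sum_const, Finset.card_univ, Fintype.card_fin, nsmul_eq_mul]
    _ ≤ _ := Finset.sum_le_sum (fun j _ => per j)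

end StarAux

/-- The largest eigenvalue of the star-sum state `σ_star(N)` on `N = n+1 ≥ 2` qubits
equals `N/2 = (n+1)/2`. -/
theorem sigmaStar_lmax (n : ℕ) (hn : 1 ≤ n) (h : (sigmaStar n).IsHermitian) :
    lmax h = ((n : ℝ) + 1) / 2 := by
  classical
  have key : ∀ w : (Fin (n+1) → Fin 2) → ℂ,
      (star w ⬝ᵥ (sigmaStar n) *ᵥ w).re
        = (∑ j : Fin n, ∑ f, if f j.castSucc = 0 ∧ f (Fin.last n) = 1 then
            Complex.normSq (w f - w (StarAux.upd j.castSucc (Fin.last n) f 1 0)) else 0) / 2 := by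
    intro w
    rw [StarAux.quad_sigma n w, Complex.ofReal_re, Finset.sum_div]
    apply Finset.sum_congr rfl
    intro j _
    rw [Finset.sum_div]
    apply Finset.sum_congr rfl
    intro f _
    split <;> simp
  apply le_antisymm
  · unfold lmax
    apply ciSup_le
    intro i
    apply StarAux.eigenvalue_le_of_quad h _ i
    intro w
    rw [key w]
    have := StarAux.edge_sum_le n w
    linarith
  · have hray := StarAux.rayleigh_le_iSup h (StarAux.v0 n)
    rw [key, StarAux.norm_v0 n] at hray
    have hlow := StarAux.edge_sum_v0 n
    unfold lmax
    have hpos : (0:ℝ) < (n:ℝ)^2 + n := by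
      have h1 : (1:ℝ) ≤ (n:ℝ) := by exact_mod_cast hn
      nlinarith
    have hmul : ((n:ℝ)+1)/2 * ((n:ℝ)^2 + n)
        ≤ (⨆ i, h.eigenvalues i) * ((n:ℝ)^2 + n) := by nlinarith [hray, hlow]
    exact le_of_mul_le_mul_right hmul hpos
end

section
/- For any assignment e ↦ (x_0^{(e)}, x_1^{(e)}) of Bell-state labels to index pairs, the largest eigenvalue of the unnormalized message-encoding state σ = Σ_{k<ℓ} |B_{x_0^{(k,ℓ)} x_1^{(k,ℓ)}}⟩⟨B_{x_0^{(k,ℓ)} x_1^{(k,ℓ)}}|_{k,ℓ} ⊗ 𝟙_{[N]\{k,ℓ}} is at most N²/4 + N/4 − 1/2. -/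
open Matrix Kronecker ComplexOrder

abbrev Q2 := Fin 2 × Fin 2
abbrev Q3 := Fin 2 × Fin 2 × Fin 2

def embed3 {N : ℕ} (k ℓ c : Fin N) (C : Matrix Q3 Q3 ℂ) :
    Matrix (Fin N → Fin 2) (Fin N → Fin 2) ℂ := fun f g =>
  C (f k, f ℓ, f c) (g k, g ℓ, g c) *
    (if ∀ i, i ≠ k → i ≠ ℓ → i ≠ c → f i = g i then 1 else 0)

def upd3 {N : ℕ} (f : Fin N → Fin 2) (k ℓ c : Fin N) (t : Q3) : Fin N → Fin 2 :=
  Function.update (Function.update (Function.update f k t.1) ℓ t.2.1) c t.2.2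

lemma upd3_k {N : ℕ} {k ℓ c : Fin N} (hkl : k ≠ ℓ) (hkc : k ≠ c) (f : Fin N → Fin 2) (t : Q3) :
    upd3 f k ℓ c t k = t.1 := by
  rw [upd3, Function.update_of_ne hkc, Function.update_of_ne hkl, Function.update_self]

lemma upd3_l {N : ℕ} {k ℓ c : Fin N} (hlc : ℓ ≠ c) (f : Fin N → Fin 2) (t : Q3) :
    upd3 f k ℓ c t ℓ = t.2.1 := by
  rw [upd3, Function.update_of_ne hlc, Function.update_self]

lemma upd3_c {N : ℕ} {k ℓ c : Fin N} (f : Fin N → Fin 2) (t : Q3) :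
    upd3 f k ℓ c t c = t.2.2 := by
  rw [upd3, Function.update_self]

lemma upd3_other {N : ℕ} {k ℓ c i : Fin N} (hik : i ≠ k) (hil : i ≠ ℓ) (hic : i ≠ c)
    (f : Fin N → Fin 2) (t : Q3) : upd3 f k ℓ c t i = f i := by
  rw [upd3, Function.update_of_ne hic, Function.update_of_ne hil, Function.update_of_ne hik]

lemma sum_split3 {N : ℕ} {k ℓ c : Fin N} (hkl : k ≠ ℓ) (hkc : k ≠ c) (hlc : ℓ ≠ c)
    (f : Fin N → Fin 2) (G : (Fin N → Fin 2) → ℂ) :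
    ∑ h : Fin N → Fin 2, (if ∀ i, i ≠ k → i ≠ ℓ → i ≠ c → f i = h i then G h else 0)
      = ∑ t : Q3, G (upd3 f k ℓ c t) := by
  rw [Finset.sum_ite, Finset.sum_const_zero, add_zero]
  have hji : ∀ a : Fin N → Fin 2, (∀ i, i ≠ k → i ≠ ℓ → i ≠ c → f i = a i) →
      upd3 f k ℓ c (a k, a ℓ, a c) = a := by
    intro a ha
    funext i
    by_cases hic : i = c
    · subst hic; rw [upd3_c]
    · by_cases hil : i = ℓ
      · subst hil; rw [upd3_l hlc]
      · by_cases hik : i = k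
        · subst hik; rw [upd3_k hkl hkc]
        · rw [upd3_other hik hil hic]; exact ha i hik hil hic
  apply Finset.sum_nbij' (i := fun h => ((h k, h ℓ, h c) : Q3)) (j := fun t => upd3 f k ℓ c t)
  · intro a _; exact Finset.mem_univ _
  · intro t _
    simp only [Finset.mem_filter, Finset.mem_univ, true_and]
    intro i hik hil hic
    exact (upd3_other hik hil hic f t).symm
  · intro a ha
    simp only [Finset.mem_filter, Finset.mem_univ, true_and] at ha
    exact hji a ha
  · intro t _
    simp only [upd3_k hkl hkc, upd3_l hlc, upd3_c]
  · intro a ha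
    simp only [Finset.mem_filter, Finset.mem_univ, true_and] at ha
    rw [hji a ha]

lemma embed3_mul {N : ℕ} {k ℓ c : Fin N} (hkl : k ≠ ℓ) (hkc : k ≠ c) (hlc : ℓ ≠ c)
    (C D : Matrix Q3 Q3 ℂ) :
    embed3 k ℓ c C * embed3 k ℓ c D = embed3 k ℓ c (C * D) := by
  ext f g
  simp only [Matrix.mul_apply, embed3]
  have step1 : ∀ h : Fin N → Fin 2,
      C (f k, f ℓ, f c) (h k, h ℓ, h c) * (if ∀ i, i ≠ k → i ≠ ℓ → i ≠ c → f i = h i then 1 else 0)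
        * (D (h k, h ℓ, h c) (g k, g ℓ, g c) *
          (if ∀ i, i ≠ k → i ≠ ℓ → i ≠ c → h i = g i then 1 else 0))
      = (if ∀ i, i ≠ k → i ≠ ℓ → i ≠ c → f i = h i then
          C (f k, f ℓ, f c) (h k, h ℓ, h c) * D (h k, h ℓ, h c) (g k, g ℓ, g c) *
            (if ∀ i, i ≠ k → i ≠ ℓ → i ≠ c → h i = g i then 1 else 0) else 0) := by
    intro h; split_ifs <;> ring
  rw [Finset.sum_congr rfl (fun h _ => step1 h), sum_split3 hkl hkc hlc]
  have step2 : ∀ t : Q3,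
      C (f k, f ℓ, f c) (upd3 f k ℓ c t k, upd3 f k ℓ c t ℓ, upd3 f k ℓ c t c) *
          D (upd3 f k ℓ c t k, upd3 f k ℓ c t ℓ, upd3 f k ℓ c t c) (g k, g ℓ, g c) *
          (if ∀ i, i ≠ k → i ≠ ℓ → i ≠ c → upd3 f k ℓ c t i = g i then 1 else 0)
      = C (f k, f ℓ, f c) t * D t (g k, g ℓ, g c) *
          (if ∀ i, i ≠ k → i ≠ ℓ → i ≠ c → f i = g i then 1 else 0) := by
    intro t
    have hcond : (∀ i, i ≠ k → i ≠ ℓ → i ≠ c → upd3 f k ℓ c t i = g i)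
        ↔ (∀ i, i ≠ k → i ≠ ℓ → i ≠ c → f i = g i) := by
      constructor <;> intro hyp i hik hil hic <;> have h5 := hyp i hik hil hic
      · rwa [upd3_other hik hil hic] at h5
      · rwa [upd3_other hik hil hic]
    rw [upd3_k hkl hkc, upd3_l hlc, upd3_c]
    by_cases hc : ∀ i, i ≠ k → i ≠ ℓ → i ≠ c → f i = g i
    · rw [if_pos hc, if_pos (hcond.2 hc)]
    · rw [if_neg hc, if_neg (fun h => hc (hcond.1 h))]
  rw [Finset.sum_congr rfl (fun t _ => step2 t), ← Finset.sum_mul]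

def bellZ (x y : Fin 2) : Fin 2 × Fin 2 → ℤ := fun p =>
  (if p = (0, y) then 1 else 0) + (-1 : ℤ) ^ (x : ℕ) * (if p = (1, y + 1) then 1 else 0)

def bellProjZ (x y : Fin 2) : Matrix (Fin 2 × Fin 2) (Fin 2 × Fin 2) ℤ :=
  Matrix.vecMulVec (bellZ x y) (bellZ x y)

lemma bell_eq (x y : Fin 2) (p : Fin 2 × Fin 2) :
    bell x y p = ((bellZ x y p : ℤ) : ℂ) / (Real.sqrt 2 : ℂ) := by
  simp only [bell, bellZ]
  push_cast
  simp [apply_ite (fun z : ℤ => (z : ℂ))]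

lemma conj_bell (x y : Fin 2) (p : Fin 2 × Fin 2) :
    (starRingEnd ℂ) (bell x y p) = bell x y p := by
  rw [bell_eq]; simp [map_div₀, Complex.conj_ofReal]

lemma sqrt2_sq : ((Real.sqrt 2 : ℝ) : ℂ) * ((Real.sqrt 2 : ℝ) : ℂ) = 2 := by
  rw [← Complex.ofReal_mul, Real.mul_self_sqrt (by norm_num)]; norm_num

lemma bellProj_eq (x y : Fin 2) :
    bellProj x y = (2 : ℂ)⁻¹ • (bellProjZ x y).map (Int.cast) := by
  ext p q
  simp only [bellProj, bellProjZ, vecMulVec_apply, Matrix.smul_apply, Matrix.map_apply,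
    bell_eq, smul_eq_mul, map_div₀, Complex.conj_ofReal, map_intCast]
  rw [div_mul_div_comm, sqrt2_sq]
  push_cast; ring

def ext13Z (A : Matrix Q2 Q2 ℤ) : Matrix Q3 Q3 ℤ :=
  fun p q => A (p.1, p.2.2) (q.1, q.2.2) * (if p.2.1 = q.2.1 then 1 else 0)

def ext23Z (A : Matrix Q2 Q2 ℤ) : Matrix Q3 Q3 ℤ :=
  fun p q => A (p.2.1, p.2.2) (q.2.1, q.2.2) * (if p.1 = q.1 then 1 else 0)

def ext13C (A : Matrix Q2 Q2 ℂ) : Matrix Q3 Q3 ℂ :=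
  fun p q => A (p.1, p.2.2) (q.1, q.2.2) * (if p.2.1 = q.2.1 then 1 else 0)

def ext23C (A : Matrix Q2 Q2 ℂ) : Matrix Q3 Q3 ℂ :=
  fun p q => A (p.2.1, p.2.2) (q.2.1, q.2.2) * (if p.1 = q.1 then 1 else 0)

lemma ext13C_smul (s : ℂ) (A : Matrix Q2 Q2 ℂ) : ext13C (s • A) = s • ext13C A := by
  ext p q; simp [ext13C, mul_assoc]

lemma ext23C_smul (s : ℂ) (A : Matrix Q2 Q2 ℂ) : ext23C (s • A) = s • ext23C A := by
  ext p q; simp [ext23C, mul_assoc]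

lemma ext13C_map (M : Matrix Q2 Q2 ℤ) :
    ext13C (M.map (Int.cast : ℤ → ℂ)) = (ext13Z M).map (Int.cast : ℤ → ℂ) := by
  ext p q; simp [ext13C, ext13Z, apply_ite (fun z : ℤ => (z : ℂ))]

lemma ext23C_map (M : Matrix Q2 Q2 ℤ) :
    ext23C (M.map (Int.cast : ℤ → ℂ)) = (ext23Z M).map (Int.cast : ℤ → ℂ) := by
  ext p q; simp [ext23C, ext23Z, apply_ite (fun z : ℤ => (z : ℂ))]

set_option maxRecDepth 100000 in
lemma coreZ (x y x' y' : Fin 2) :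
    ext13Z (bellProjZ x y) * (ext23Z (bellProjZ x' y') * ext13Z (bellProjZ x y))
      = ext13Z (bellProjZ x y) := by revert x y x' y'; decide

set_option maxRecDepth 100000 in
lemma sqZ (x y : Fin 2) : bellProjZ x y * bellProjZ x y = bellProjZ x y + bellProjZ x y := by
  revert x y; decide

set_option maxRecDepth 100000 in
lemma symZ (x y a b a' b' : Fin 2) :
    bellProjZ x y (b, a) (b', a') = bellProjZ x y (a, b) (a', b') := by
  revert x y a b a' b'; decide

def upd2 {N : ℕ} (f : Fin N → Fin 2) (k ℓ : Fin N) (t : Q2) : Fin N → Fin 2 :=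
  Function.update (Function.update f k t.1) ℓ t.2

lemma upd2_k {N : ℕ} {k ℓ : Fin N} (hkl : k ≠ ℓ) (f : Fin N → Fin 2) (t : Q2) :
    upd2 f k ℓ t k = t.1 := by
  rw [upd2, Function.update_of_ne hkl, Function.update_self]

lemma upd2_l {N : ℕ} {k ℓ : Fin N} (f : Fin N → Fin 2) (t : Q2) :
    upd2 f k ℓ t ℓ = t.2 := by
  rw [upd2, Function.update_self]

lemma upd2_other {N : ℕ} {k ℓ i : Fin N} (hik : i ≠ k) (hil : i ≠ ℓ)
    (f : Fin N → Fin 2) (t : Q2) : upd2 f k ℓ t i = f i := by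
  rw [upd2, Function.update_of_ne hil, Function.update_of_ne hik]

lemma sum_split2 {N : ℕ} {k ℓ : Fin N} (hkl : k ≠ ℓ)
    (f : Fin N → Fin 2) (G : (Fin N → Fin 2) → ℂ) :
    ∑ h : Fin N → Fin 2, (if ∀ i, i ≠ k → i ≠ ℓ → f i = h i then G h else 0)
      = ∑ t : Q2, G (upd2 f k ℓ t) := by
  rw [Finset.sum_ite, Finset.sum_const_zero, add_zero]
  have hji : ∀ a : Fin N → Fin 2, (∀ i, i ≠ k → i ≠ ℓ → f i = a i) →
      upd2 f k ℓ (a k, a ℓ) = a := by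
    intro a ha
    funext i
    by_cases hil : i = ℓ
    · subst hil; rw [upd2_l]
    · by_cases hik : i = k
      · subst hik; rw [upd2_k hkl]
      · rw [upd2_other hik hil]; exact ha i hik hil
  apply Finset.sum_nbij' (i := fun h => ((h k, h ℓ) : Q2)) (j := fun t => upd2 f k ℓ t)
  · intro a _; exact Finset.mem_univ _
  · intro t _
    simp only [Finset.mem_filter, Finset.mem_univ, true_and]
    intro i hik hil
    exact (upd2_other hik hil f t).symm
  · intro a ha
    simp only [Finset.mem_filter, Finset.mem_univ, true_and] at ha
    exact hji a ha
  · intro t _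
    simp only [upd2_k hkl, upd2_l]
  · intro a ha
    simp only [Finset.mem_filter, Finset.mem_univ, true_and] at ha
    rw [hji a ha]

lemma embed2_mul {N : ℕ} {k ℓ : Fin N} (hkl : k ≠ ℓ) (A B : Matrix Q2 Q2 ℂ) :
    embed2 k ℓ A * embed2 k ℓ B = embed2 k ℓ (A * B) := by
  ext f g
  simp only [Matrix.mul_apply, embed2]
  have step1 : ∀ h : Fin N → Fin 2,
      A (f k, f ℓ) (h k, h ℓ) * (if ∀ i, i ≠ k → i ≠ ℓ → f i = h i then 1 else 0)
        * (B (h k, h ℓ) (g k, g ℓ) * (if ∀ i, i ≠ k → i ≠ ℓ → h i = g i then 1 else 0))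
      = (if ∀ i, i ≠ k → i ≠ ℓ → f i = h i then
          A (f k, f ℓ) (h k, h ℓ) * B (h k, h ℓ) (g k, g ℓ) *
            (if ∀ i, i ≠ k → i ≠ ℓ → h i = g i then 1 else 0) else 0) := by
    intro h; split_ifs <;> ring
  rw [Finset.sum_congr rfl (fun h _ => step1 h), sum_split2 hkl]
  have step2 : ∀ t : Q2,
      A (f k, f ℓ) (upd2 f k ℓ t k, upd2 f k ℓ t ℓ) *
          B (upd2 f k ℓ t k, upd2 f k ℓ t ℓ) (g k, g ℓ) *
          (if ∀ i, i ≠ k → i ≠ ℓ → upd2 f k ℓ t i = g i then 1 else 0)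
      = A (f k, f ℓ) t * B t (g k, g ℓ) *
          (if ∀ i, i ≠ k → i ≠ ℓ → f i = g i then 1 else 0) := by
    intro t
    have hcond : (∀ i, i ≠ k → i ≠ ℓ → upd2 f k ℓ t i = g i)
        ↔ (∀ i, i ≠ k → i ≠ ℓ → f i = g i) := by
      constructor <;> intro hyp i hik hil <;> have h5 := hyp i hik hil
      · rwa [upd2_other hik hil] at h5
      · rwa [upd2_other hik hil]
    rw [upd2_k hkl, upd2_l]
    by_cases hc : ∀ i, i ≠ k → i ≠ ℓ → f i = g i
    · rw [if_pos hc, if_pos (hcond.2 hc)]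
    · rw [if_neg hc, if_neg (fun h => hc (hcond.1 h))]
  rw [Finset.sum_congr rfl (fun t _ => step2 t), ← Finset.sum_mul]

lemma embed2_eq_embed3_13 {N : ℕ} {k ℓ c : Fin N} (hkl : k ≠ ℓ) (hkc : k ≠ c) (hlc : ℓ ≠ c)
    (A : Matrix Q2 Q2 ℂ) : embed2 k c A = embed3 k ℓ c (ext13C A) := by
  ext f g
  simp only [embed2, embed3, ext13C]
  have hcond : (∀ i, i ≠ k → i ≠ c → f i = g i)
      ↔ (f ℓ = g ℓ ∧ ∀ i, i ≠ k → i ≠ ℓ → i ≠ c → f i = g i) := by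
    constructor
    · intro h; exact ⟨h ℓ (Ne.symm hkl) hlc, fun i hik _ hic => h i hik hic⟩
    · rintro ⟨h1, h2⟩ i hik hic
      by_cases hil : i = ℓ
      · subst hil; exact h1
      · exact h2 i hik hil hic
  by_cases h1 : f ℓ = g ℓ <;> by_cases h2 : ∀ i, i ≠ k → i ≠ ℓ → i ≠ c → f i = g i
  · rw [if_pos (hcond.2 ⟨h1, h2⟩), if_pos h1, if_pos h2]; ring
  · rw [if_neg (fun h => h2 (hcond.1 h).2), if_pos h1, if_neg h2]; ring
  · rw [if_neg (fun h => h1 (hcond.1 h).1), if_neg h1, if_pos h2]; ring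
  · rw [if_neg (fun h => h2 (hcond.1 h).2), if_neg h1, if_neg h2]; ring

lemma embed2_eq_embed3_23 {N : ℕ} {k ℓ c : Fin N} (hkl : k ≠ ℓ) (hkc : k ≠ c) (hlc : ℓ ≠ c)
    (B : Matrix Q2 Q2 ℂ) : embed2 ℓ c B = embed3 k ℓ c (ext23C B) := by
  ext f g
  simp only [embed2, embed3, ext23C]
  have hcond : (∀ i, i ≠ ℓ → i ≠ c → f i = g i)
      ↔ (f k = g k ∧ ∀ i, i ≠ k → i ≠ ℓ → i ≠ c → f i = g i) := by
    constructor
    · intro h; exact ⟨h k hkl hkc, fun i _ hil hic => h i hil hic⟩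
    · rintro ⟨h1, h2⟩ i hil hic
      by_cases hik : i = k
      · subst hik; exact h1
      · exact h2 i hik hil hic
  by_cases h1 : f k = g k <;> by_cases h2 : ∀ i, i ≠ k → i ≠ ℓ → i ≠ c → f i = g i
  · rw [if_pos (hcond.2 ⟨h1, h2⟩), if_pos h1, if_pos h2]; ring
  · rw [if_neg (fun h => h2 (hcond.1 h).2), if_pos h1, if_neg h2]; ring
  · rw [if_neg (fun h => h1 (hcond.1 h).1), if_neg h1, if_pos h2]; ring
  · rw [if_neg (fun h => h2 (hcond.1 h).2), if_neg h1, if_neg h2]; ring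

lemma embed3_smul {N : ℕ} (k ℓ c : Fin N) (s : ℂ) (C : Matrix Q3 Q3 ℂ) :
    embed3 k ℓ c (s • C) = s • embed3 k ℓ c C := by
  ext f g; simp [embed3, mul_assoc]

lemma embed2_conjTranspose {N : ℕ} (k ℓ : Fin N) (A : Matrix Q2 Q2 ℂ) :
    (embed2 k ℓ A)ᴴ = embed2 k ℓ Aᴴ := by
  ext f g
  simp only [conjTranspose_apply, embed2, Matrix.conjTranspose_apply]
  have hcond : (∀ i, i ≠ k → i ≠ ℓ → g i = f i) ↔ (∀ i, i ≠ k → i ≠ ℓ → f i = g i) := by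
    constructor <;> intro h i hik hil <;> exact (h i hik hil).symm
  by_cases h : ∀ i, i ≠ k → i ≠ ℓ → f i = g i
  · rw [if_pos (hcond.2 h), if_pos h]; simp
  · rw [if_neg (fun hh => h (hcond.1 hh)), if_neg h]; simp

lemma bellProj_swap (x y : Fin 2) (a b a' b' : Fin 2) :
    bellProj x y (b, a) (b', a') = bellProj x y (a, b) (a', b') := by
  rw [bellProj_eq]
  simp only [Matrix.smul_apply, Matrix.map_apply, symZ]

lemma embed2_swap_bell {N : ℕ} (k ℓ : Fin N) (x y : Fin 2) :
    embed2 ℓ k (bellProj x y) = embed2 k ℓ (bellProj x y) := by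
  ext f g
  simp only [embed2]
  have hcond : (∀ i, i ≠ ℓ → i ≠ k → f i = g i) ↔ (∀ i, i ≠ k → i ≠ ℓ → f i = g i) := by
    constructor <;> intro h i h1 h2 <;> exact h i h2 h1
  rw [bellProj_swap]
  by_cases h : ∀ i, i ≠ k → i ≠ ℓ → f i = g i
  · rw [if_pos (hcond.2 h), if_pos h]
  · rw [if_neg (fun hh => h (hcond.1 hh)), if_neg h]
lemma mapInt_mul {n : Type*} [Fintype n] [DecidableEq n] (M N : Matrix n n ℤ) :
    (M.map (Int.cast : ℤ → ℂ)) * (N.map (Int.cast : ℤ → ℂ)) = (M * N).map Int.cast := by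
  have := (Matrix.map_mul (L := M) (M := N) (f := Int.castRingHom ℂ)).symm
  simpa using this

lemma bellProjZ_symm (x y : Fin 2) (p q : Q2) : bellProjZ x y q p = bellProjZ x y p q := by
  simp [bellProjZ, vecMulVec_apply, mul_comm]

lemma bellProj_herm (x y : Fin 2) : (bellProj x y)ᴴ = bellProj x y := by
  ext p q
  rw [bellProj_eq]
  simp only [conjTranspose_apply, Matrix.smul_apply, Matrix.map_apply, smul_eq_mul, star_mul',
    map_intCast, star_inv₀]
  rw [bellProjZ_symm]
  norm_num

lemma bellProj_idem (x y : Fin 2) : bellProj x y * bellProj x y = bellProj x y := by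
  rw [bellProj_eq, smul_mul_assoc, mul_smul_comm, smul_smul, mapInt_mul, sqZ]
  ext p q
  simp only [Matrix.smul_apply, Matrix.map_apply, smul_eq_mul, Matrix.add_apply, Int.cast_add]
  ring

lemma core_identity {N : ℕ} {k ℓ c : Fin N} (hkl : k ≠ ℓ) (hkc : k ≠ c) (hlc : ℓ ≠ c)
    (x y x' y' : Fin 2) :
    embed2 k c (bellProj x y) * (embed2 ℓ c (bellProj x' y') * embed2 k c (bellProj x y))
      = (4 : ℂ)⁻¹ • embed2 k c (bellProj x y) := by
  have key : ext13C (bellProj x y) * (ext23C (bellProj x' y') * ext13C (bellProj x y))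
      = (4 : ℂ)⁻¹ • ext13C (bellProj x y) := by
    rw [bellProj_eq, bellProj_eq, ext13C_smul, ext23C_smul, ext13C_map, ext23C_map]
    set A := (ext13Z (bellProjZ x y)).map (Int.cast : ℤ → ℂ) with hA
    set B := (ext23Z (bellProjZ x' y')).map (Int.cast : ℤ → ℂ) with hB
    have h : A * (B * A) = A := by rw [hA, hB, mapInt_mul, mapInt_mul, coreZ]
    calc (2:ℂ)⁻¹ • A * ((2:ℂ)⁻¹ • B * (2:ℂ)⁻¹ • A)
        = ((2:ℂ)⁻¹*((2:ℂ)⁻¹*(2:ℂ)⁻¹)) • (A * (B * A)) := by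
          simp only [smul_mul_assoc, mul_smul_comm, smul_smul]
          ring_nf
      _ = (4:ℂ)⁻¹ • ((2:ℂ)⁻¹ • A) := by rw [h, smul_smul]; norm_num
  rw [embed2_eq_embed3_13 hkl hkc hlc (bellProj x y), embed2_eq_embed3_23 hkl hkc hlc,
    embed3_mul hkl hkc hlc, embed3_mul hkl hkc hlc, ← embed3_smul]
  rw [key]


noncomputable def toE {ι : Type*} [Fintype ι] (x : ι → ℂ) : EuclideanSpace ℂ ι :=
  (WithLp.linearEquiv 2 ℂ (ι → ℂ)).symm x

lemma toE_sum {ι : Type*} [Fintype ι] {α : Type*} (s : Finset α) (f : α → ι → ℂ) :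
    toE (∑ p ∈ s, f p) = ∑ p ∈ s, toE (f p) := map_sum _ _ _

lemma toE_smul {ι : Type*} [Fintype ι] (c : ℂ) (x : ι → ℂ) :
    toE (c • x) = c • toE x := map_smul _ _ _

lemma inner_toE {ι : Type*} [Fintype ι] (x y : ι → ℂ) :
    (inner ℂ (toE x) (toE y) : ℂ) = ∑ i, (starRingEnd ℂ) (x i) * y i := by
  simp [toE, PiLp.inner_apply, RCLike.inner_apply]
  exact Finset.sum_congr rfl (fun i _ => mul_comm _ _)

lemma inner_toE_mulVec {ι : Type*} [Fintype ι] (A : Matrix ι ι ℂ) (x y : ι → ℂ) :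
    (inner ℂ (toE x) (toE (A *ᵥ y)) : ℂ) = inner ℂ (toE (Aᴴ *ᵥ x)) (toE y) := by
  simp only [inner_toE, Matrix.mulVec, dotProduct, Matrix.conjTranspose_apply,
    map_sum, Finset.mul_sum, Finset.sum_mul]
  rw [Finset.sum_comm]
  apply Finset.sum_congr rfl; intro i _
  apply Finset.sum_congr rfl; intro j _
  simp only [_root_.map_mul, RCLike.star_def, Complex.conj_conj]
  ring

lemma re_inner_self {ι : Type*} [Fintype ι] (x : EuclideanSpace ℂ ι) :
    (inner ℂ x x : ℂ).re = ‖x‖^2 := by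
  rw [inner_self_eq_norm_sq_to_K]
  simp [← Complex.ofReal_pow]

lemma mulVec_inner_toE {ι : Type*} [Fintype ι] (A : Matrix ι ι ℂ) (x y : ι → ℂ) :
    (inner ℂ (toE (A *ᵥ x)) (toE y) : ℂ) = inner ℂ (toE x) (toE (Aᴴ *ᵥ y)) := by
  rw [inner_toE_mulVec Aᴴ x y, Matrix.conjTranspose_conjTranspose]

lemma master {ι : Type*} [Fintype ι] (A B : Matrix ι ι ℂ) (v : ι → ℂ) :
    (inner ℂ (toE (A *ᵥ v)) (toE (B *ᵥ v)) : ℂ) = inner ℂ (toE v) (toE ((Aᴴ * B) *ᵥ v)) := by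
  rw [mulVec_inner_toE, Matrix.mulVec_mulVec]

lemma sum_mulVec' {ι : Type*} [Fintype ι] {α : Type*} (s : Finset α)
    (A : α → Matrix ι ι ℂ) (v : ι → ℂ) :
    (∑ p ∈ s, A p) *ᵥ v = ∑ p ∈ s, (A p *ᵥ v) := by
  ext i
  simp only [Matrix.mulVec, dotProduct, Matrix.sum_apply, Finset.sum_apply,
    Finset.sum_mul]
  rw [Finset.sum_comm]

lemma abstract_bound {ι : Type*} [Fintype ι] {α : Type*} [DecidableEq α]
    (s : Finset α) (P : α → Matrix ι ι ℂ) (n : ℕ) (hcard : s.card ≤ n)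
    (hherm : ∀ p ∈ s, (P p)ᴴ = P p)
    (hidem : ∀ p ∈ s, P p * P p = P p)
    (hcross : ∀ p ∈ s, ∀ q ∈ s, p ≠ q → P p * (P q * P p) = (4:ℂ)⁻¹ • P p)
    (v : ι → ℂ) (hv : ‖toE v‖ = 1) :
    (inner ℂ (toE v) (toE ((∑ p ∈ s, P p) *ᵥ v)) : ℂ).re ≤ (n : ℝ)/2 + 1/2 := by
  classical
  set w : α → ι → ℂ := fun p => P p *ᵥ v with hw
  set a : α → ℝ := fun p => ‖toE (w p)‖ with ha
  have ha0 : ∀ p, 0 ≤ a p := fun p => norm_nonneg _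
  have h1 : ∀ p ∈ s, (inner ℂ (toE v) (toE (w p)) : ℂ) = ((a p : ℂ))^2 := by
    intro p hp
    have e : (inner ℂ (toE (P p *ᵥ v)) (toE (P p *ᵥ v)) : ℂ)
        = inner ℂ (toE v) (toE (((P p)ᴴ * P p) *ᵥ v)) := master _ _ v
    rw [hherm p hp, hidem p hp] at e
    rw [hw]
    simp only
    rw [← e, inner_self_eq_norm_sq_to_K]
    norm_num [ha]
    rfl
  have h1re : ∀ p ∈ s, (inner ℂ (toE v) (toE (w p)) : ℂ).re = (a p)^2 := by
    intro p hp
    rw [h1 p hp]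
    simp only [← Complex.ofReal_pow, Complex.ofReal_re]
  have hPqwp : ∀ p ∈ s, ∀ q ∈ s, p ≠ q → ‖toE (P q *ᵥ w p)‖ ≤ a p / 2 := by
    intro p hp q hq hpq
    have e : (inner ℂ (toE (P q *ᵥ w p)) (toE (P q *ᵥ w p)) : ℂ)
        = inner ℂ (toE v) (toE (((P q * P p)ᴴ * (P q * P p)) *ᵥ v)) := by
      rw [hw]; simp only
      rw [Matrix.mulVec_mulVec]
      exact master _ _ v
    have hmat : (P q * P p)ᴴ * (P q * P p) = (4:ℂ)⁻¹ • P p := by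
      rw [Matrix.conjTranspose_mul, hherm p hp, hherm q hq]
      calc P p * P q * (P q * P p) = P p * (P q * (P q * P p)) := by
            rw [mul_assoc]
        _ = P p * ((P q * P q) * P p) := by rw [← mul_assoc (P q)]
        _ = P p * (P q * P p) := by rw [hidem q hq]
        _ = (4:ℂ)⁻¹ • P p := hcross p hp q hq hpq
    rw [hmat, Matrix.smul_mulVec, toE_smul, inner_smul_right] at e
    rw [h1 p hp] at e
    have e3 : ‖toE (P q *ᵥ w p)‖^2 = (a p)^2 / 4 := by
      have h' := congrArg Complex.re e
      rw [re_inner_self] at h'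
      rw [h']
      have h4 : ((4:ℂ)⁻¹ * ((a p : ℝ) : ℂ)^2) = (((a p)^2/4 : ℝ) : ℂ) := by push_cast; ring
      rw [h4, Complex.ofReal_re]
    nlinarith [norm_nonneg (toE (P q *ᵥ w p)), ha0 p]
  have hcr : ∀ p ∈ s, ∀ q ∈ s, p ≠ q →
      ‖(inner ℂ (toE (w p)) (toE (w q)) : ℂ)‖ ≤ a p * a q / 2 := by
    intro p hp q hq hpq
    have e : (inner ℂ (toE (w p)) (toE (w q)) : ℂ)
        = inner ℂ (toE (P q *ᵥ w p)) (toE (w q)) := by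
      conv_lhs => rw [show w q = P q *ᵥ w q by
        rw [hw]; simp only; rw [Matrix.mulVec_mulVec, hidem q hq]]
      rw [inner_toE_mulVec, hherm q hq]
    rw [e]
    calc ‖(inner ℂ (toE (P q *ᵥ w p)) (toE (w q)) : ℂ)‖
        ≤ ‖toE (P q *ᵥ w p)‖ * ‖toE (w q)‖ := norm_inner_le_norm _ _
      _ ≤ (a p / 2) * a q := by
          apply mul_le_mul_of_nonneg_right (hPqwp p hp q hq hpq) (ha0 q)
      _ = a p * a q / 2 := by ring
  set S : ℝ := ∑ p ∈ s, (a p)^2 with hS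
  set T : ℝ := ∑ p ∈ s, a p with hT'
  have hS0 : 0 ≤ S := Finset.sum_nonneg (fun p _ => sq_nonneg _)
  have hT : T^2 ≤ (n : ℝ) * S := by
    have h5 := Finset.sum_mul_sq_le_sq_mul_sq s a (fun _ => 1)
    simp only [mul_one, one_pow, Finset.sum_const, nsmul_eq_mul] at h5
    calc T^2 ≤ S * s.card := h5
      _ ≤ S * n := by
          apply mul_le_mul_of_nonneg_left _ hS0
          exact_mod_cast hcard
      _ = (n:ℝ) * S := by ring
  have hgoal_eq : (inner ℂ (toE v) (toE ((∑ p ∈ s, P p) *ᵥ v)) : ℂ).re = S := by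
    rw [sum_mulVec', toE_sum, inner_sum, Complex.re_sum]
    exact Finset.sum_congr rfl h1re
  rw [hgoal_eq]
  set W : EuclideanSpace ℂ ι := ∑ p ∈ s, toE (w p) with hWdef
  have hSW : S ≤ ‖W‖ := by
    have h1' : (inner ℂ (toE v) W : ℂ).re = S := by
      rw [hWdef, inner_sum, Complex.re_sum]
      exact Finset.sum_congr rfl h1re
    calc S = (inner ℂ (toE v) W : ℂ).re := h1'.symm
      _ ≤ ‖(inner ℂ (toE v) W : ℂ)‖ := Complex.re_le_norm _
      _ ≤ ‖toE v‖ * ‖W‖ := norm_inner_le_norm _ _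
      _ = ‖W‖ := by rw [hv, one_mul]
  have hW2 : ‖W‖^2 ≤ ((n:ℝ)/2 + 1/2) * S := by
    have hWW : ‖W‖^2 = ∑ p ∈ s, (∑ q ∈ s, (inner ℂ (toE (w p)) (toE (w q)) : ℂ).re) := by
      rw [← re_inner_self W, hWdef, sum_inner, Complex.re_sum]
      apply Finset.sum_congr rfl; intro p _
      rw [inner_sum, Complex.re_sum]
    rw [hWW]
    have hrow : ∀ p ∈ s, (∑ q ∈ s, (inner ℂ (toE (w p)) (toE (w q)) : ℂ).re)
        ≤ (a p)^2 + a p / 2 * (T - a p) := by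
      intro p hp
      rw [← Finset.add_sum_erase s _ hp]
      have hdiag : (inner ℂ (toE (w p)) (toE (w p)) : ℂ).re = (a p)^2 := re_inner_self _
      rw [hdiag]
      apply add_le_add_right
      calc (∑ q ∈ s.erase p, (inner ℂ (toE (w p)) (toE (w q)) : ℂ).re)
          ≤ ∑ q ∈ s.erase p, a p / 2 * a q := by
            apply Finset.sum_le_sum
            intro q hq
            have hq' := Finset.mem_of_mem_erase hq
            have hne : p ≠ q := fun h => (Finset.ne_of_mem_erase hq) h.symm
            calc (inner ℂ (toE (w p)) (toE (w q)) : ℂ).re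
                ≤ ‖(inner ℂ (toE (w p)) (toE (w q)) : ℂ)‖ := Complex.re_le_norm _
              _ ≤ a p * a q / 2 := hcr p hp q hq' hne
              _ = a p / 2 * a q := by ring
        _ = a p / 2 * (T - a p) := by
            rw [← Finset.mul_sum, Finset.sum_erase_eq_sub hp]
    calc (∑ p ∈ s, (∑ q ∈ s, (inner ℂ (toE (w p)) (toE (w q)) : ℂ).re))
        ≤ ∑ p ∈ s, ((a p)^2 + a p / 2 * (T - a p)) := Finset.sum_le_sum hrow
      _ = S + (T^2 - S)/2 := by
          rw [Finset.sum_add_distrib]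
          congr 1
          have h8 : ∀ p ∈ s, a p / 2 * (T - a p) = T/2 * a p - (a p)^2/2 := by
            intro p _; ring
          rw [Finset.sum_congr rfl h8, Finset.sum_sub_distrib, ← Finset.mul_sum,
            ← Finset.sum_div]
          ring
      _ ≤ ((n:ℝ)/2 + 1/2) * S := by nlinarith [hT]
  nlinarith [hSW, hW2, hS0, norm_nonneg W]
def oth {N : ℕ} (c : Fin N) (p : Fin N × Fin N) : Fin N :=
  if p.1 = c then p.2 else p.1

lemma oth_lemma {N : ℕ} {c : Fin N} {p : Fin N × Fin N} (hlt : p.1 < p.2)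
    (hc : p.1 = c ∨ p.2 = c) :
    oth c p ≠ c ∧ ((p.1 = c ∧ p.2 = oth c p ∧ c < oth c p)
      ∨ (p.2 = c ∧ p.1 = oth c p ∧ oth c p < c)) := by
  unfold oth
  by_cases h1 : p.1 = c
  · rw [if_pos h1]
    refine ⟨?_, Or.inl ⟨h1, rfl, h1 ▸ hlt⟩⟩
    intro h2
    rw [← h1] at h2
    exact absurd h2.symm (ne_of_lt hlt)
  · rw [if_neg h1]
    have h2 : p.2 = c := hc.resolve_left h1
    exact ⟨h1, Or.inr ⟨h2, rfl, h2 ▸ hlt⟩⟩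

lemma oth_inj {N : ℕ} {c : Fin N} {p q : Fin N × Fin N}
    (hpl : p.1 < p.2) (hpc : p.1 = c ∨ p.2 = c)
    (hql : q.1 < q.2) (hqc : q.1 = c ∨ q.2 = c)
    (h : oth c p = oth c q) : p = q := by
  obtain ⟨-, hp⟩ := oth_lemma hpl hpc
  obtain ⟨-, hq⟩ := oth_lemma hql hqc
  rcases hp with ⟨h1, h2, h3⟩ | ⟨h1, h2, h3⟩ <;> rcases hq with ⟨h4, h5, h6⟩ | ⟨h4, h5, h6⟩
  · exact Prod.ext (h1.trans h4.symm) (by rw [h2, h5, h])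
  · rw [h] at h3; exact absurd h6 (lt_asymm h3)
  · rw [h] at h3; exact absurd h6 (lt_asymm h3)
  · exact Prod.ext (by rw [h2, h5, h]) (h1.trans h4.symm)

lemma embed2_norm {N : ℕ} {c : Fin N} {p : Fin N × Fin N} (hlt : p.1 < p.2)
    (hc : p.1 = c ∨ p.2 = c) (x y : Fin 2) :
    embed2 p.1 p.2 (bellProj x y) = embed2 (oth c p) c (bellProj x y) := by
  obtain ⟨-, hp⟩ := oth_lemma hlt hc
  rcases hp with ⟨h1, h2, -⟩ | ⟨h1, h2, -⟩
  · rw [h1, ← h2, embed2_swap_bell]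
  · rw [h1, ← h2]

lemma double_count {N : ℕ} {ι : Type*} [Fintype ι] [DecidableEq ι]
    (M : Fin N × Fin N → Matrix ι ι ℂ) :
    ∑ c : Fin N, ∑ p ∈ (Finset.filter (fun p : Fin N × Fin N => p.1 < p.2)
        Finset.univ).filter (fun p => p.1 = c ∨ p.2 = c), M p
      = (∑ p ∈ Finset.filter (fun p : Fin N × Fin N => p.1 < p.2) Finset.univ, M p)
        + (∑ p ∈ Finset.filter (fun p : Fin N × Fin N => p.1 < p.2) Finset.univ, M p) := by
  have step1 : ∀ c : Fin N, ∑ p ∈ (Finset.filter (fun p : Fin N × Fin N => p.1 < p.2)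
      Finset.univ).filter (fun p => p.1 = c ∨ p.2 = c), M p
      = ∑ p ∈ Finset.filter (fun p : Fin N × Fin N => p.1 < p.2) Finset.univ,
          (if p.1 = c ∨ p.2 = c then M p else 0) :=
    fun c => Finset.sum_filter _ _
  rw [Finset.sum_congr rfl (fun c _ => step1 c), Finset.sum_comm]
  rw [← Finset.sum_add_distrib]
  apply Finset.sum_congr rfl
  intro p hp
  have hlt : p.1 < p.2 := (Finset.mem_filter.1 hp).2
  have hne : p.1 ≠ p.2 := ne_of_lt hlt
  have hcond : ∀ c : Fin N, (p.1 = c ∨ p.2 = c) ↔ c ∈ ({p.1, p.2} : Finset (Fin N)) := by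
    intro c
    simp [Finset.mem_insert, Finset.mem_singleton, eq_comm]
  rw [Finset.sum_congr rfl (fun c _ => by rw [if_congr (hcond c) rfl rfl])]
  rw [Finset.sum_ite_mem, Finset.univ_inter, Finset.sum_const, Finset.card_pair hne,
    two_smul]
lemma toE_add {ι : Type*} [Fintype ι] (x y : ι → ℂ) :
    toE (x + y) = toE x + toE y := map_add _ _ _

lemma star_bound {N : ℕ} (m : Fin N × Fin N → Fin 2 × Fin 2) (c : Fin N)
    (v : (Fin N → Fin 2) → ℂ) (hv : ‖toE v‖ = 1) :
    (inner ℂ (toE v) (toE ((∑ p ∈ (Finset.filter (fun p : Fin N × Fin N => p.1 < p.2)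
        Finset.univ).filter (fun p => p.1 = c ∨ p.2 = c),
        embed2 p.1 p.2 (bellProj (m p).1 (m p).2)) *ᵥ v)) : ℂ).re
      ≤ ((N - 1 : ℕ) : ℝ)/2 + 1/2 := by
  have hmem : ∀ p ∈ (Finset.filter (fun p : Fin N × Fin N => p.1 < p.2)
      Finset.univ).filter (fun p => p.1 = c ∨ p.2 = c),
      p.1 < p.2 ∧ (p.1 = c ∨ p.2 = c) := by
    intro p hp
    exact ⟨(Finset.mem_filter.1 (Finset.mem_filter.1 hp).1).2, (Finset.mem_filter.1 hp).2⟩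
  apply abstract_bound _ _ (N - 1) ?_ ?_ ?_ ?_ v hv
  · -- card
    have hsub : ((Finset.filter (fun p : Fin N × Fin N => p.1 < p.2)
        Finset.univ).filter (fun p => p.1 = c ∨ p.2 = c)).card
        ≤ (Finset.univ.erase c).card := by
      apply Finset.card_le_card_of_injOn (oth c)
      · intro p hp
        obtain ⟨hlt, hc⟩ := hmem p hp
        exact Finset.mem_erase.2 ⟨(oth_lemma hlt hc).1, Finset.mem_univ _⟩
      · intro p hp q hq h
        obtain ⟨hpl, hpc⟩ := hmem p (Finset.mem_coe.1 hp)
        obtain ⟨hql, hqc⟩ := hmem q (Finset.mem_coe.1 hq)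
        exact oth_inj hpl hpc hql hqc h
    rwa [Finset.card_erase_of_mem (Finset.mem_univ _), Finset.card_univ,
      Fintype.card_fin] at hsub
  · -- herm
    intro p hp
    rw [embed2_conjTranspose, bellProj_herm]
  · -- idem
    intro p hp
    rw [embed2_mul (ne_of_lt (hmem p hp).1), bellProj_idem]
  · -- cross
    intro p hp q hq hpq
    obtain ⟨hpl, hpc⟩ := hmem p hp
    obtain ⟨hql, hqc⟩ := hmem q hq
    have hkl : oth c p ≠ oth c q := fun h => hpq (oth_inj hpl hpc hql hqc h)
    have hkc : oth c p ≠ c := (oth_lemma hpl hpc).1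
    have hlc : oth c q ≠ c := (oth_lemma hql hqc).1
    rw [embed2_norm hpl hpc, embed2_norm hql hqc]
    exact core_identity hkl hkc hlc _ _ _ _
/-- For any assignment of Bell-state labels to index pairs, the largest eigenvalue of the
unnormalized message-encoding state `σ = Σ_{k<ℓ} |B⟩⟨B|_{k,ℓ} ⊗ 𝟙` is at most
`N²/4 + N/4 − 1/2`. -/
theorem sigma_lmax_le (N : ℕ) (hN : 2 ≤ N) (m : Fin N × Fin N → Fin 2 × Fin 2)
    (hσ : (∑ p ∈ Finset.filter (fun p : Fin N × Fin N => p.1 < p.2) Finset.univ,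
        embed2 p.1 p.2 (bellProj (m p).1 (m p).2)).IsHermitian) :
    lmax hσ ≤ (N : ℝ) ^ 2 / 4 + (N : ℝ) / 4 - 1 / 2 := by
  haveI : Nonempty (Fin N → Fin 2) := ⟨fun _ => 0⟩
  have key : ∀ i, hσ.eigenvalues i ≤ (N : ℝ) ^ 2 / 4 + (N : ℝ) / 4 - 1 / 2 := by
    intro i
    set v : EuclideanSpace ℂ (Fin N → Fin 2) := hσ.eigenvectorBasis i with hvdef
    set vf : (Fin N → Fin 2) → ℂ := (WithLp.equiv 2 _) v with hvf
    have htoE : toE vf = v := (WithLp.equiv 2 _).symm_apply_apply v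
    have hv1 : ‖toE vf‖ = 1 := by
      rw [htoE]; exact hσ.eigenvectorBasis.orthonormal.1 i
    have hev : (∑ p ∈ Finset.filter (fun p : Fin N × Fin N => p.1 < p.2) Finset.univ,
        embed2 p.1 p.2 (bellProj (m p).1 (m p).2)) *ᵥ vf = hσ.eigenvalues i • vf :=
      hσ.mulVec_eigenvectorBasis i
    have hlam : (inner ℂ (toE vf) (toE ((∑ p ∈ Finset.filter
        (fun p : Fin N × Fin N => p.1 < p.2) Finset.univ,
        embed2 p.1 p.2 (bellProj (m p).1 (m p).2)) *ᵥ vf)) : ℂ).re = hσ.eigenvalues i := by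
      rw [hev]
      have hsm : hσ.eigenvalues i • vf = ((hσ.eigenvalues i : ℝ) : ℂ) • vf := by
        funext j; simp [Pi.smul_apply, Complex.real_smul]
      rw [hsm, toE_smul, inner_smul_right, htoE, inner_self_eq_norm_sq_to_K,
        hσ.eigenvectorBasis.orthonormal.1 i]
      norm_num
    have hdc := double_count (N := N)
      (fun p => embed2 p.1 p.2 (bellProj (m p).1 (m p).2))
    have h2lam : (inner ℂ (toE vf) (toE (((∑ c : Fin N, ∑ p ∈ (Finset.filter
        (fun p : Fin N × Fin N => p.1 < p.2) Finset.univ).filter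
        (fun p => p.1 = c ∨ p.2 = c), embed2 p.1 p.2 (bellProj (m p).1 (m p).2))) *ᵥ vf)) : ℂ).re
        = 2 * hσ.eigenvalues i := by
      rw [hdc, Matrix.add_mulVec, toE_add, inner_add_right, Complex.add_re, hlam]
      ring
    have hsum : (inner ℂ (toE vf) (toE (((∑ c : Fin N, ∑ p ∈ (Finset.filter
        (fun p : Fin N × Fin N => p.1 < p.2) Finset.univ).filter
        (fun p => p.1 = c ∨ p.2 = c), embed2 p.1 p.2 (bellProj (m p).1 (m p).2))) *ᵥ vf)) : ℂ).re
        = ∑ c : Fin N, (inner ℂ (toE vf) (toE ((∑ p ∈ (Finset.filter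
        (fun p : Fin N × Fin N => p.1 < p.2) Finset.univ).filter
        (fun p => p.1 = c ∨ p.2 = c), embed2 p.1 p.2 (bellProj (m p).1 (m p).2)) *ᵥ vf)) : ℂ).re := by
      rw [sum_mulVec', toE_sum, inner_sum, Complex.re_sum]
    have hbound : (2 : ℝ) * hσ.eigenvalues i
        ≤ (N : ℝ) * (((N - 1 : ℕ) : ℝ)/2 + 1/2) := by
      rw [← h2lam, hsum]
      calc (∑ c : Fin N, (inner ℂ (toE vf) (toE ((∑ p ∈ (Finset.filter
            (fun p : Fin N × Fin N => p.1 < p.2) Finset.univ).filter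
            (fun p => p.1 = c ∨ p.2 = c),
            embed2 p.1 p.2 (bellProj (m p).1 (m p).2)) *ᵥ vf)) : ℂ).re)
          ≤ ∑ _c : Fin N, (((N - 1 : ℕ) : ℝ)/2 + 1/2) :=
            Finset.sum_le_sum (fun c _ => star_bound m c vf hv1)
        _ = (N : ℝ) * (((N - 1 : ℕ) : ℝ)/2 + 1/2) := by
            rw [Finset.sum_const, Finset.card_univ, Fintype.card_fin, nsmul_eq_mul]
    have hc1 : ((N - 1 : ℕ) : ℝ) = (N : ℝ) - 1 := by
      have h1 : 1 ≤ N := by omega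
      push_cast [Nat.cast_sub h1]
      ring
    have hNr : (2 : ℝ) ≤ (N : ℝ) := by exact_mod_cast hN
    rw [hc1] at hbound
    nlinarith [hbound, hNr]
  exact ciSup_le key
end
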